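/- arXiv:1812.11635 — 7 statements merged into one kernel-verified Lean document; each statement's English description precedes it below -/
import Mathlib

section
/- Let l ∈ F^× \ (F^×)² and 𝔟 a fractional ideal of F be such that (l,𝔟) is a fundamental discriminant and such that l𝔟² is an integral ideal of 𝒪 coprime to 2𝒪. Let D ∈ F^× \ (F^×)² be such that τ(lD) < 0 for every real embedding τ of F, and let 𝔞 be a fractional ideal of F with D ∈ 𝔞⁻². Set Δ = lD and 𝔠 = 𝔞𝔟. Then (D,𝔞) is a discriminant if and only if (Δ,𝔠) is a discriminant. -/
open NumberField

/-- The subset `𝒪 + 𝔞·ω` of `K`. -/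
def orderSet (F : Type*) [Field F] [NumberField F] {K : Type*} [Field K] [Algebra F K]
    (𝔞 : FractionalIdeal (nonZeroDivisors (𝓞 F)) F) (ω : K) : Set K :=
  {y | ∃ c : 𝓞 F, ∃ α ∈ 𝔞,
    y = algebraMap F K (algebraMap (𝓞 F) F c) + algebraMap F K α * ω}

/-- `(ξ, 𝔞)` is a discriminant: there is `ω` in the quadratic extension `K` with
`disc ω = (ω - ω̄)² = ξ` such that `𝒪 + 𝔞·ω` is a subring (an order) of `K`. -/
def IsDisc (F : Type*) [Field F] [NumberField F] {K : Type*} [Field K] [Algebra F K]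
    (σ : K ≃ₐ[F] K) (ξ : F) (𝔞 : FractionalIdeal (nonZeroDivisors (𝓞 F)) F) : Prop :=
  ∃ ω : K, (ω - σ ω) ^ 2 = algebraMap F K ξ ∧
    ∃ S : Subring K, (S : Set K) = orderSet F 𝔞 ω

/-- `(ξ, 𝔞)` is a fundamental discriminant: the order `𝒪 + 𝔞·ω` is the maximal order,
i.e. the integral closure of `𝒪` in `K`. -/
def IsFundDisc (F : Type*) [Field F] [NumberField F] {K : Type*} [Field K] [Algebra F K]
    [Algebra (𝓞 F) K] [IsScalarTower (𝓞 F) F K]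
    (σ : K ≃ₐ[F] K) (ξ : F) (𝔞 : FractionalIdeal (nonZeroDivisors (𝓞 F)) F) : Prop :=
  ∃ ω : K, (ω - σ ω) ^ 2 = algebraMap F K ξ ∧
    ∃ S : Subring K, (S : Set K) = orderSet F 𝔞 ω ∧
      (S : Set K) = (integralClosure (𝓞 F) K : Set K)

/-!
Both notions of discriminant reduce to arithmetic in `F`: over a quadratic extension `K`,
`(ξ, 𝔞)` is a discriminant iff `ξ = t² - 4n` with `t ∈ 𝔞⁻¹` and `n ∈ 𝔞⁻²` (`IsQuadDisc`).
Indeed `ω` generates an order `𝒪 + 𝔞ω` exactly when its minimal polynomial `X² - tX + n` has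
`t ∈ 𝔞⁻¹`, `n ∈ 𝔞⁻²`, and conversely `ω = (t + √ξ)/2` works as soon as `ξ` is not a square.

Writing `l = s² - 4m`, the identity `(s² - 4m)(t² - 4n) = (st)² - 4(s²n + mt² - 4mn)` gives
the forward implication. For the converse, `l𝔟² + 4𝒪 = 𝒪` yields `e ∈ 𝔟²` and `r ∈ 𝒪` with
`le + 4r = 1`, and then `D = e²l·(lD) + 4r(2 - 4r)D` exhibits `D` in the required form from
`lD = U² - 4V`. That `lD` is negative at a real place makes it a non-square.
-/
open scoped nonZeroDivisors

namespace FractionalIdeal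

section Membership

variable {R : Type*} [CommRing R] {S : Submonoid R} {P : Type*} [CommRing P] [Algebra R P]

instance : AddSubgroupClass (FractionalIdeal S P) P where
  add_mem := Submodule.add_mem _
  zero_mem _ := Submodule.zero_mem _
  neg_mem := Submodule.neg_mem _

instance : SMulMemClass (FractionalIdeal S P) R P where
  smul_mem r _ := Submodule.smul_mem _ r

theorem algebraMap_mul_mem {I : FractionalIdeal S P} (c : R) {x : P} (hx : x ∈ I) :
    algebraMap R P c * x ∈ I := by
  rw [← Algebra.smul_def]; exact SMulMemClass.smul_mem c hx

theorem exists_mul_add_four_mul_eq_one [IsLocalization S P] {I : Ideal R} {l : P}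
    {𝔠 : FractionalIdeal S P}
    (hI : (I : FractionalIdeal S P) = spanSingleton S l * 𝔠)
    (hI2 : IsCoprime I (Ideal.span {2})) :
    ∃ e ∈ 𝔠, ∃ r : R, l * e + 4 * algebraMap R P r = 1 := by
  have hI4 : IsCoprime I (Ideal.span {4}) := by
    simpa [Ideal.span_singleton_pow, show (2 : R) ^ 2 = 4 by norm_num] using hI2.pow_right (n := 2)
  obtain ⟨i, hi, j, hj, hij⟩ := Ideal.isCoprime_iff_exists.mp hI4
  obtain ⟨r, rfl⟩ := Ideal.mem_span_singleton'.mp hj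
  have hi' : algebraMap R P i ∈ spanSingleton S l * 𝔠 := hI ▸ (mem_coeIdeal S).mpr ⟨i, hi, rfl⟩
  obtain ⟨e, he, hie⟩ := mem_singleton_mul.mp hi'
  refine ⟨e, he, r, ?_⟩
  rw [← hie, ← map_one (algebraMap R P), ← hij]
  simp only [map_add, map_mul, map_ofNat]
  ring

end Membership

variable {R : Type*} [CommRing R] [IsDedekindDomain R] {F : Type*} [Field F] [Algebra R F]
  [IsFractionRing R F]

theorem mem_mul_inv_mul_inv_of_forall_mul_mul_mem {𝔞 B : FractionalIdeal R⁰ F} (h𝔞 : 𝔞 ≠ 0)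
    {x : F} (h : ∀ α ∈ 𝔞, ∀ β ∈ 𝔞, x * α * β ∈ B) : x ∈ B * (𝔞⁻¹ * 𝔞⁻¹) := by
  rw [← _root_.mul_inv, ← div_eq_mul_inv, mem_div_iff_of_ne_zero (mul_ne_zero h𝔞 h𝔞)]
  intro y hy
  refine FractionalIdeal.mul_induction_on hy (fun α hα β hβ => ?_) (fun _ _ => ?_)
  · simpa only [mul_assoc] using h α hα β hβ
  · rw [mul_add]; exact add_mem

end FractionalIdeal

section IsQuadDisc

open FractionalIdeal

variable {R : Type*} [CommRing R] [IsDedekindDomain R] {F : Type*} [Field F] [Algebra R F]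
  [IsFractionRing R F]

def IsQuadDisc (ξ : F) (𝔞 : FractionalIdeal R⁰ F) : Prop :=
  ∃ t ∈ 𝔞⁻¹, ∃ n ∈ 𝔞⁻¹ * 𝔞⁻¹, ξ = t ^ 2 - 4 * n

theorem IsQuadDisc.mul {l D : F} {𝔞 𝔟 : FractionalIdeal R⁰ F} (hl : IsQuadDisc l 𝔟)
    (hD : IsQuadDisc D 𝔞) : IsQuadDisc (l * D) (𝔞 * 𝔟) := by
  obtain ⟨s, hs, m, hm, rfl⟩ := hl
  obtain ⟨t, ht, n, hn, rfl⟩ := hD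
  have hinv : (𝔞 * 𝔟)⁻¹ = 𝔟⁻¹ * 𝔞⁻¹ := by rw [_root_.mul_inv, mul_comm]
  refine ⟨s * t, hinv ▸ mul_mem_mul hs ht, s ^ 2 * n + m * t ^ 2 - 4 * (m * n), ?_, by ring⟩
  rw [hinv, mul_mul_mul_comm]
  refine sub_mem (add_mem ?_ ?_) ?_
  · rw [pow_two]; exact mul_mem_mul (mul_mem_mul hs hs) hn
  · rw [pow_two]; exact mul_mem_mul hm (mul_mem_mul ht ht)
  · simpa only [map_ofNat] using algebraMap_mul_mem (4 : R) (mul_mem_mul hm hn)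

theorem IsQuadDisc.of_mul {l D e : F} {r : R} {𝔞 𝔟 : FractionalIdeal R⁰ F} (h𝔟 : 𝔟 ≠ 0)
    (hl : IsQuadDisc l 𝔟) (he : e ∈ 𝔟 ^ 2) (hler : l * e + 4 * algebraMap R F r = 1)
    (hD : D ∈ 𝔞⁻¹ * 𝔞⁻¹) (hlD : IsQuadDisc (l * D) (𝔞 * 𝔟)) : IsQuadDisc D 𝔞 := by
  obtain ⟨s, hs, m, hm, hlsm⟩ := hl
  obtain ⟨U, hU, V, hV, hlDUV⟩ := hlD
  have hUe : U * e ∈ 𝔞⁻¹ * 𝔟 := by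
    convert mul_mem_mul hU he using 1
    field_simp
  refine ⟨U * e * s, ?_, -(algebraMap R F (r * (2 - 4 * r)) * D) +
    algebraMap R F (1 - 4 * r) * (V * e) + m * (U * e) * (U * e), ?_, ?_⟩
  · convert mul_mem_mul hUe hs using 1
    field_simp
  · refine add_mem (add_mem (neg_mem (algebraMap_mul_mem _ hD)) (algebraMap_mul_mem _ ?_)) ?_
    · convert mul_mem_mul hV he using 1
      field_simp
    · convert mul_mem_mul (mul_mem_mul hm hUe) hUe using 1
      field_simp
  · simp only [map_mul, map_sub, map_one, map_ofNat]
    linear_combination (e ^ 2 * l) * hlDUV + (U ^ 2 * e ^ 2) * hlsm +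
      (-D * (1 - 4 * algebraMap R F r + l * e) - 4 * V * e) * hler

end IsQuadDisc

section QuadraticExtension

variable {F K : Type*} [Field F] [Field K] [Algebra F K]

theorem linearIndependent_one_of_notMem_range {ω : K} (hω : ω ∉ Set.range (algebraMap F K)) :
    LinearIndependent F ![1, ω] :=
  (LinearIndependent.pair_iff' one_ne_zero).mpr fun a ha =>
    hω ⟨a, by rwa [Algebra.algebraMap_eq_smul_one]⟩

theorem exists_eq_algebraMap_add_algebraMap_mul (hK : Module.finrank F K = 2) {ω : K}
    (hω : ω ∉ Set.range (algebraMap F K)) (z : K) :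
    ∃ a b : F, z = algebraMap F K a + algebraMap F K b * ω := by
  have hspan := (linearIndependent_one_of_notMem_range hω).span_eq_top_of_card_eq_finrank
    (by simp [hK])
  have hz : z ∈ Submodule.span F {1, ω} := by
    rw [← Matrix.range_cons_cons_empty, hspan]; trivial
  obtain ⟨a, b, hab⟩ := Submodule.mem_span_pair.mp hz
  exact ⟨a, b, by rw [← hab, Algebra.smul_def, Algebra.smul_def, mul_one]⟩

theorem eq_and_eq_of_algebraMap_add_algebraMap_mul_eq {ω : K}
    (hω : ω ∉ Set.range (algebraMap F K)) {a b a' b' : F}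
    (h : algebraMap F K a + algebraMap F K b * ω = algebraMap F K a' + algebraMap F K b' * ω) :
    a = a' ∧ b = b' := by
  have h0 : (a - a') • (1 : K) + (b - b') • ω = 0 := by
    simp only [Algebra.smul_def, map_sub]
    linear_combination h
  have := (LinearIndependent.pair_iff (x := (1 : K)) (y := ω)).mp
    (linearIndependent_one_of_notMem_range hω) _ _ h0
  simpa only [sub_eq_zero] using this

theorem AlgEquiv.eq_refl_of_apply_eq_self (hK : Module.finrank F K = 2) {σ : K ≃ₐ[F] K} {ω : K}
    (hω : ω ∉ Set.range (algebraMap F K)) (hσω : σ ω = ω) : σ = AlgEquiv.refl := by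
  ext z
  obtain ⟨a, b, rfl⟩ := exists_eq_algebraMap_add_algebraMap_mul hK hω z
  simp [hσω]

theorem AlgEquiv.apply_eq_neg_of_sq_mem_range (hK : Module.finrank F K = 2) {σ : K ≃ₐ[F] K}
    (hσ : σ ≠ AlgEquiv.refl) {s : K} (hs : s ∉ Set.range (algebraMap F K))
    (hs2 : s ^ 2 ∈ Set.range (algebraMap F K)) : σ s = -s := by
  obtain ⟨ξ, hξ⟩ := hs2
  have : σ s ^ 2 = s ^ 2 := by rw [← map_pow, ← hξ, σ.commutes]
  exact (sq_eq_sq_iff_eq_or_eq_neg.mp this).resolve_left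
    fun h => hσ (AlgEquiv.eq_refl_of_apply_eq_self hK hs h)

end QuadraticExtension

section Discriminant

open FractionalIdeal NumberField

variable {F : Type*} [Field F] [NumberField F] {K : Type*} [Field K] [Algebra F K]

theorem coeff_mul_mem_of_mul_mem_orderSet {𝔞 : FractionalIdeal (𝓞 F)⁰ F} {ω : K}
    (hω : ω ∉ Set.range (algebraMap F K)) {x y : F}
    (hω2 : ω ^ 2 = algebraMap F K x + algebraMap F K y * ω)
    (hmul : ∀ u ∈ orderSet F 𝔞 ω, ∀ v ∈ orderSet F 𝔞 ω, u * v ∈ orderSet F 𝔞 ω)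
    {α β : F} (hα : α ∈ 𝔞) (hβ : β ∈ 𝔞) :
    x * α * β ∈ (1 : FractionalIdeal (𝓞 F)⁰ F) ∧ y * α * β ∈ 𝔞 := by
  have hαω : algebraMap F K α * ω ∈ orderSet F 𝔞 ω := ⟨0, α, hα, by simp⟩
  have hβω : algebraMap F K β * ω ∈ orderSet F 𝔞 ω := ⟨0, β, hβ, by simp⟩
  obtain ⟨c, γ, hγ, hcγ⟩ := hmul _ hαω _ hβω
  have hexp : algebraMap F K (x * α * β) + algebraMap F K (y * α * β) * ω
      = algebraMap F K (algebraMap (𝓞 F) F c) + algebraMap F K γ * ω := by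
    simp only [map_mul] at hcγ ⊢
    linear_combination hcγ - algebraMap F K α * algebraMap F K β * hω2
  obtain ⟨hx, hy⟩ := eq_and_eq_of_algebraMap_add_algebraMap_mul_eq hω hexp
  exact ⟨(mem_one_iff _).mpr ⟨c, hx.symm⟩, hy ▸ hγ⟩

theorem IsDisc.isQuadDisc (hK : Module.finrank F K = 2) {σ : K ≃ₐ[F] K} {ξ : F}
    {𝔞 : FractionalIdeal (𝓞 F)⁰ F} (h𝔞 : 𝔞 ≠ 0) (h : IsDisc F σ ξ 𝔞) : IsQuadDisc ξ 𝔞 := by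
  obtain ⟨ω, hωξ, S, hS⟩ := h
  by_cases hσω : σ ω = ω
  · have hξ : ξ = 0 := (algebraMap F K).injective (by rw [← hωξ, hσω, sub_self, map_zero]; ring)
    exact ⟨0, ZeroMemClass.zero_mem _, 0, ZeroMemClass.zero_mem _, by rw [hξ]; ring⟩
  have hω : ω ∉ Set.range (algebraMap F K) := fun ⟨a, ha⟩ => hσω (ha ▸ σ.commutes a)
  obtain ⟨x, y, hxy⟩ := exists_eq_algebraMap_add_algebraMap_mul hK hω (ω ^ 2)
  have hσxy : σ ω ^ 2 = algebraMap F K x + algebraMap F K y * σ ω := by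
    simpa using congrArg σ hxy
  -- `σ ω` is the other root of `X² - yX - x`
  have hσω' : σ ω = algebraMap F K y - ω := by
    have : (ω - σ ω) * (σ ω - (algebraMap F K y - ω)) = 0 := by linear_combination hxy - hσxy
    exact sub_eq_zero.mp ((mul_eq_zero.mp this).resolve_left (sub_ne_zero.mpr (Ne.symm hσω)))
  have hmul : ∀ u ∈ orderSet F 𝔞 ω, ∀ v ∈ orderSet F 𝔞 ω, u * v ∈ orderSet F 𝔞 ω := by
    simp only [← hS, SetLike.mem_coe]; exact fun u hu v hv => S.mul_mem hu hv
  have hcoeff : ∀ α ∈ 𝔞, ∀ β ∈ 𝔞, x * α * β ∈ (1 : FractionalIdeal (𝓞 F)⁰ F) ∧ y * α * β ∈ 𝔞 :=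
    fun _ hα _ hβ => coeff_mul_mem_of_mul_mem_orderSet hω hxy hmul hα hβ
  refine ⟨y, ?_, -x, neg_mem ?_, ?_⟩
  · simpa [← mul_assoc, mul_inv_cancel₀ h𝔞] using
      mem_mul_inv_mul_inv_of_forall_mul_mul_mem h𝔞 fun α hα β hβ => (hcoeff α hα β hβ).2
  · simpa using mem_mul_inv_mul_inv_of_forall_mul_mul_mem h𝔞 fun α hα β hβ => (hcoeff α hα β hβ).1
  · apply (algebraMap F K).injective
    simp only [map_sub, map_mul, map_pow, map_neg, map_ofNat]
    linear_combination -hωξ + 4 * hxy - (3 * ω - σ ω - algebraMap F K y) * hσω'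

theorem exists_subring_coe_eq_orderSet {𝔞 : FractionalIdeal (𝓞 F)⁰ F} {t n : F} (ht : t ∈ 𝔞⁻¹)
    (hn : n ∈ 𝔞⁻¹ * 𝔞⁻¹) {ω : K} (hω2 : ω ^ 2 = algebraMap F K t * ω - algebraMap F K n) :
    ∃ S : Subring K, (S : Set K) = orderSet F 𝔞 ω := by
  have h𝔞 : 𝔞 * 𝔞⁻¹ ≤ 1 := inv_eq (I := 𝔞) ▸ mul_one_div_le_one
  refine ⟨{ carrier := orderSet F 𝔞 ω
            zero_mem' := ⟨0, 0, ZeroMemClass.zero_mem _, by simp⟩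
            one_mem' := ⟨1, 0, ZeroMemClass.zero_mem _, by simp⟩
            add_mem' := ?add
            neg_mem' := ?neg
            mul_mem' := ?mul }, rfl⟩
  case add =>
    rintro _ _ ⟨c, α, hα, rfl⟩ ⟨d, β, hβ, rfl⟩
    exact ⟨c + d, α + β, add_mem hα hβ, by simp only [map_add]; ring⟩
  case neg =>
    rintro _ ⟨c, α, hα, rfl⟩
    exact ⟨-c, -α, neg_mem hα, by simp only [map_neg]; ring⟩
  case mul =>
    rintro _ _ ⟨c, α, hα, rfl⟩ ⟨d, β, hβ, rfl⟩
    have hαβn : α * β * n ∈ (1 : FractionalIdeal (𝓞 F)⁰ F) := by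
      refine mul_le_one' h𝔞 h𝔞 ?_
      convert mul_mem_mul (mul_mem_mul hα hn) hβ using 1 <;> ring
    obtain ⟨e, he⟩ := (mem_one_iff _).mp hαβn
    have hαβt : α * β * t ∈ 𝔞 := by
      refine (mul_le_of_le_one_right' h𝔞) ?_
      convert mul_mem_mul hα (mul_mem_mul hβ ht) using 1; ring
    refine ⟨c * d - e, algebraMap (𝓞 F) F c * β + algebraMap (𝓞 F) F d * α + α * β * t,
      add_mem (add_mem (algebraMap_mul_mem c hβ) (algebraMap_mul_mem d hα)) hαβt, ?_⟩
    simp only [map_sub, map_add, map_mul, he]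
    linear_combination (algebraMap F K α * algebraMap F K β) * hω2

theorem IsQuadDisc.isDisc (hK : Module.finrank F K = 2) {σ : K ≃ₐ[F] K}
    (hσ : σ ≠ AlgEquiv.refl) {ξ : F} (hξ : ∀ m : F, ξ ≠ m ^ 2)
    (hsqrt : ∃ s : K, s ^ 2 = algebraMap F K ξ) {𝔞 : FractionalIdeal (𝓞 F)⁰ F}
    (h : IsQuadDisc ξ 𝔞) : IsDisc F σ ξ 𝔞 := by
  obtain ⟨t, ht, n, hn, rfl⟩ := h
  obtain ⟨s, hs⟩ := hsqrt
  have : CharZero K := charZero_of_injective_algebraMap (algebraMap F K).injective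
  have hsF : s ∉ Set.range (algebraMap F K) := fun ⟨a, ha⟩ =>
    hξ a ((algebraMap F K).injective (by rw [← hs, ← ha, map_pow]))
  have hσs := AlgEquiv.apply_eq_neg_of_sq_mem_range hK hσ hsF ⟨_, hs.symm⟩
  -- the root `(t + √ξ) / 2` of `X² - tX + n`
  have hσω : σ ((algebraMap F K t + s) / 2) = (algebraMap F K t - s) / 2 := by
    simp only [map_div₀, map_add, σ.commutes, hσs, map_ofNat]; ring
  refine ⟨(algebraMap F K t + s) / 2, ?_, exists_subring_coe_eq_orderSet ht hn ?_⟩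
  · rw [hσω, ← hs]; ring
  simp only [map_sub, map_mul, map_pow, map_ofNat] at hs
  linear_combination hs / 4

end Discriminant

theorem NumberField.nonempty_ringHom_real_of_forall_im_eq_zero {F : Type*} [Field F]
    [NumberField F] (htr : ∀ φ : F →+* ℂ, ∀ x : F, (φ x).im = 0) : Nonempty (F →+* ℝ) := by
  obtain ⟨φ⟩ := (inferInstance : Nonempty (F →+* ℂ))
  exact ⟨(ComplexEmbedding.isReal_iff.mpr
    (RingHom.ext fun x => Complex.conj_eq_iff_im.mpr (htr φ x))).embedding⟩

theorem statement_0_general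
    (F : Type*) [Field F] [NumberField F]
    (htr : ∀ φ : F →+* ℂ, ∀ x : F, (φ x).im = 0)
    (Kl : Type*) [Field Kl] [Algebra F Kl] [Algebra (𝓞 F) Kl] [IsScalarTower (𝓞 F) F Kl]
    (hKl : Module.finrank F Kl = 2)
    (σl : Kl ≃ₐ[F] Kl)
    (KD : Type*) [Field KD] [Algebra F KD]
    (hKD : Module.finrank F KD = 2)
    (σD : KD ≃ₐ[F] KD) (hσD : σD ≠ AlgEquiv.refl)
    (KΔ : Type*) [Field KΔ] [Algebra F KΔ]
    (hKΔ : Module.finrank F KΔ = 2)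
    (σΔ : KΔ ≃ₐ[F] KΔ) (hσΔ : σΔ ≠ AlgEquiv.refl)
    (l D : F)
    (hDns : ∀ m : F, D ≠ m ^ 2)
    (hsqrtD : ∃ s : KD, s ^ 2 = algebraMap F KD D)
    (hsqrtΔ : ∃ s : KΔ, s ^ 2 = algebraMap F KΔ (l * D))
    (𝔞 𝔟 : FractionalIdeal (nonZeroDivisors (𝓞 F)) F) (h𝔞0 : 𝔞 ≠ 0) (h𝔟0 : 𝔟 ≠ 0)
    (hfund : IsFundDisc F σl l 𝔟)
    (hint : ∃ I : Ideal (𝓞 F),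
      (I : FractionalIdeal (nonZeroDivisors (𝓞 F)) F)
          = FractionalIdeal.spanSingleton (nonZeroDivisors (𝓞 F)) l * 𝔟 ^ 2 ∧
        IsCoprime I (Ideal.span {(2 : 𝓞 F)}))
    (hneg : ∀ τ : F →+* ℝ, τ (l * D) < 0)
    (hmem : D ∈ 𝔞⁻¹ * 𝔞⁻¹) :
    IsDisc F σD D 𝔞 ↔ IsDisc F σΔ (l * D) (𝔞 * 𝔟) := by
  obtain ⟨ω, hω, S, hS, -⟩ := hfund
  have hl : IsQuadDisc l 𝔟 := IsDisc.isQuadDisc hKl h𝔟0 ⟨ω, hω, S, hS⟩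
  obtain ⟨τ⟩ := nonempty_ringHom_real_of_forall_im_eq_zero htr
  have hlD : ∀ m : F, l * D ≠ m ^ 2 := fun m h =>
    (hneg τ).not_ge (h ▸ map_pow τ m 2 ▸ sq_nonneg _)
  constructor
  · intro hD
    exact (hl.mul (hD.isQuadDisc hKD h𝔞0)).isDisc hKΔ hσΔ hlD hsqrtΔ
  · intro hΔ
    obtain ⟨I, hI, hI2⟩ := hint
    obtain ⟨e, he, r, hler⟩ := FractionalIdeal.exists_mul_add_four_mul_eq_one hI hI2
    have hD := hl.of_mul h𝔟0 he hler hmem (hΔ.isQuadDisc hKΔ (mul_ne_zero h𝔞0 h𝔟0))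
    exact hD.isDisc hKD hσD hDns hsqrtD

/-- `(D,𝔞)` is a discriminant iff `(Δ,𝔠) = (lD, 𝔞𝔟)` is a discriminant. -/
theorem statement_0
    (F : Type*) [Field F] [NumberField F]
    (htr : ∀ φ : F →+* ℂ, ∀ x : F, (φ x).im = 0)
    (Kl : Type*) [Field Kl] [Algebra F Kl] [Algebra (𝓞 F) Kl] [IsScalarTower (𝓞 F) F Kl]
    [FiniteDimensional F Kl] (hKl : Module.finrank F Kl = 2)
    (σl : Kl ≃ₐ[F] Kl) (hσl : σl ≠ AlgEquiv.refl)
    (KD : Type*) [Field KD] [Algebra F KD]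
    [FiniteDimensional F KD] (hKD : Module.finrank F KD = 2)
    (σD : KD ≃ₐ[F] KD) (hσD : σD ≠ AlgEquiv.refl)
    (KΔ : Type*) [Field KΔ] [Algebra F KΔ]
    [FiniteDimensional F KΔ] (hKΔ : Module.finrank F KΔ = 2)
    (σΔ : KΔ ≃ₐ[F] KΔ) (hσΔ : σΔ ≠ AlgEquiv.refl)
    (l D : F) (hl0 : l ≠ 0) (hlns : ∀ m : F, l ≠ m ^ 2)
    (hD0 : D ≠ 0) (hDns : ∀ m : F, D ≠ m ^ 2)
    (hsqrtl : ∃ s : Kl, s ^ 2 = algebraMap F Kl l)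
    (hsqrtD : ∃ s : KD, s ^ 2 = algebraMap F KD D)
    (hsqrtΔ : ∃ s : KΔ, s ^ 2 = algebraMap F KΔ (l * D))
    (𝔞 𝔟 : FractionalIdeal (nonZeroDivisors (𝓞 F)) F) (h𝔞0 : 𝔞 ≠ 0) (h𝔟0 : 𝔟 ≠ 0)
    (hfund : IsFundDisc F σl l 𝔟)
    (hint : ∃ I : Ideal (𝓞 F),
      (I : FractionalIdeal (nonZeroDivisors (𝓞 F)) F)
          = FractionalIdeal.spanSingleton (nonZeroDivisors (𝓞 F)) l * 𝔟 ^ 2 ∧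
        IsCoprime I (Ideal.span {(2 : 𝓞 F)}))
    (hneg : ∀ τ : F →+* ℝ, τ (l * D) < 0)
    (hmem : D ∈ 𝔞⁻¹ * 𝔞⁻¹) :
    IsDisc F σD D 𝔞 ↔ IsDisc F σΔ (l * D) (𝔞 * 𝔟) :=
  statement_0_general F htr Kl hKl σl KD hKD σD hσD KΔ hKΔ σΔ hσΔ l D hDns hsqrtD hsqrtΔ 𝔞 𝔟 h𝔞0 h𝔟0
    hfund hint hneg hmem
end

section
/- Let l ∈ F^× \ (F^×)² and 𝔟 a fractional ideal of F be such that (l,𝔟) is a fundamental discriminant and such that l𝔟² is an integral ideal of 𝒪 coprime to 2𝒪. Let D ∈ F^× \ (F^×)² be such that τ(lD) < 0 for every real embedding τ of F, and let 𝔞 be a fractional ideal of F with D ∈ 𝔞⁻². Set Δ = lD and 𝔠 = 𝔞𝔟. Assume moreover that the integral ideals D𝔞² and l𝔟² are coprime. Then (D,𝔞) is a fundamental discriminant if and only if (Δ,𝔠) is a fundamental discriminant. -/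
open NumberField

/-!
Write `𝒪` for the integers of `F`. In the coordinates `u + v√ξ` of `F(√ξ)`, the pair `(ξ, 𝔠)` is a
fundamental discriminant iff for some `a ∈ F` (with `ω = a + √ξ/2`) an element `u + v√ξ` is
integral exactly when `2v ∈ 𝔠` and `u - 2va ∈ 𝒪`. This splits into the integrality of `𝔠ω`,
i.e. `2a𝔠 ⊆ 𝒪` and `(a² - ξ/4)𝔠² ⊆ 𝒪`, and maximality.

If `a` serves `(D, 𝔞)` and `b` serves `(l, 𝔟)`, then `2ab` serves `(lD, 𝔞𝔟)`: integrality follows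
from `4a²b² - lD/4 = D(b² - l/4) + l(a² - D/4) + 4(a² - D/4)(b² - l/4)`, and maximality from
relative traces in `F(√l, √D)`, which give `2vD𝔞 ⊆ 𝔟` and `2vl𝔟 ⊆ 𝔞`, together with
`D𝔞² + l𝔟² = 𝒪`. Conversely, if `c` serves `(lD, 𝔞𝔟)`, then `2bct` serves `(D, 𝔞)`, where
`t ∈ 𝔟²` with `lt ≡ 1 mod 2` exists because `l𝔟²` is prime to `2`.
-/

open FractionalIdeal Polynomial
open scoped nonZeroDivisors

lemma isIntegral_of_sq_add_mul_add {R S : Type*} [CommRing R] [CommRing S] [Algebra R S] {x : S}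
    (r₁ r₀ : R) (h : x ^ 2 + algebraMap R S r₁ * x + algebraMap R S r₀ = 0) : IsIntegral R x :=
  ⟨X ^ 2 + (C r₁ * X + C r₀), monic_X_pow_add degree_linear_lt, by simpa [add_assoc] using h⟩

section QuadraticExtension

variable {F K : Type*} [Field F] [Field K] [Algebra F K]

lemma linearIndependent_one_pair {s : K} (hs : s ∉ Set.range (algebraMap F K)) :
    LinearIndependent F ![1, s] := by
  refine LinearIndependent.pair_iff.mpr fun c d h => ?_
  obtain rfl : d = 0 := by
    by_contra hd
    refine hs ⟨-c / d, ?_⟩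
    rw [Algebra.smul_def, Algebra.smul_def, mul_one, add_eq_zero_iff_neg_eq] at h
    rw [map_div₀, map_neg, div_eq_iff (by simpa using hd), h, mul_comm]
  simpa using h

lemma exists_eq_add_mul (hK : Module.finrank F K = 2) {s : K}
    (hs : s ∉ Set.range (algebraMap F K)) (x : K) :
    ∃ u v : F, x = algebraMap F K u + algebraMap F K v * s := by
  have hspan := (linearIndependent_one_pair hs).span_eq_top_of_card_eq_finrank (by simp [hK])
  have hx : x ∈ Submodule.span F {1, s} := by
    rw [← Matrix.range_cons_cons_empty, hspan]
    trivial
  obtain ⟨u, v, huv⟩ := Submodule.mem_span_pair.mp hx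
  exact ⟨u, v, by rw [← huv, Algebra.smul_def, Algebra.smul_def, mul_one]⟩

lemma eq_and_eq_of_add_mul_eq {s : K} (hs : s ∉ Set.range (algebraMap F K)) {u v u' v' : F}
    (h : algebraMap F K u + algebraMap F K v * s = algebraMap F K u' + algebraMap F K v' * s) :
    u = u' ∧ v = v' := by
  have hsub : (u - u') • (1 : K) + (v - v') • s = 0 := by
    rw [Algebra.smul_def, Algebra.smul_def, mul_one, map_sub, map_sub]
    linear_combination h
  have := (LinearIndependent.pair_iff (x := (1 : K)) (y := s)).mp
    (linearIndependent_one_pair hs) _ _ hsub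
  exact ⟨sub_eq_zero.mp this.1, sub_eq_zero.mp this.2⟩

lemma not_mem_range_of_sq_eq {ξ : F} (hξ : ∀ m : F, ξ ≠ m ^ 2) {s : K}
    (hs : s ^ 2 = algebraMap F K ξ) : s ∉ Set.range (algebraMap F K) := by
  rintro ⟨m, rfl⟩
  exact hξ m ((algebraMap F K).injective (by rw [map_pow, hs]))

lemma AlgEquiv.apply_add_mul_of_apply_eq_neg {σ : K ≃ₐ[F] K} {s : K} (hσs : σ s = -s) (u v : F) :
    σ (algebraMap F K u + algebraMap F K v * s) = algebraMap F K u - algebraMap F K v * s := by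
  rw [map_add, map_mul, AlgEquiv.commutes, AlgEquiv.commutes, hσs, mul_neg, sub_eq_add_neg]

lemma AlgEquiv.apply_eq_neg_of_sq_eq (hK : Module.finrank F K = 2) {σ : K ≃ₐ[F] K}
    (hσ : σ ≠ AlgEquiv.refl) {s : K} (hs : s ∉ Set.range (algebraMap F K)) {ξ : F}
    (hs2 : s ^ 2 = algebraMap F K ξ) : σ s = -s := by
  have hσs2 : σ s ^ 2 = s ^ 2 := by rw [← map_pow, hs2, AlgEquiv.commutes]
  have h : (σ s - s) * (σ s + s) = 0 := by linear_combination hσs2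
  refine eq_neg_of_add_eq_zero_left ((mul_eq_zero.mp h).resolve_left fun hfix => hσ ?_)
  ext x
  obtain ⟨u, v, rfl⟩ := exists_eq_add_mul hK hs x
  rw [map_add, map_mul, AlgEquiv.commutes, AlgEquiv.commutes, sub_eq_zero.mp hfix]
  rfl

end QuadraticExtension

section IntegersOfField

variable {F : Type*} [Field F]

local notation "𝒪" => RingHom.range (algebraMap (𝓞 F) F)

lemma mul_mul_mem_of_forall_mul_mem {I J : FractionalIdeal (𝓞 F)⁰ F} {x y : F}
    (hI : ∀ i ∈ I, x * i ∈ 𝒪) (hJ : ∀ j ∈ J, y * j ∈ 𝒪) {k : F} (hk : k ∈ I * J) :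
    x * y * k ∈ 𝒪 := by
  refine FractionalIdeal.mul_induction_on hk (fun i hi j hj => ?_) fun k k' hk hk' => ?_
  · simpa only [mul_mul_mul_comm] using mul_mem (hI i hi) (hJ j hj)
  · simpa only [mul_add] using add_mem hk hk'

section NumberField

variable [NumberField F]

lemma mem_range_of_sq_add_mul_add {x c₁ c₀ : F} (h₁ : c₁ ∈ 𝒪) (h₀ : c₀ ∈ 𝒪)
    (h : x ^ 2 + c₁ * x + c₀ = 0) : x ∈ 𝒪 := by
  obtain ⟨r₁, rfl⟩ := h₁
  obtain ⟨r₀, rfl⟩ := h₀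
  exact IsIntegrallyClosed.isIntegral_iff.mp (isIntegral_of_sq_add_mul_add r₁ r₀ h)

lemma mem_range_of_sq_mem {x : F} (h : x ^ 2 ∈ 𝒪) : x ∈ 𝒪 :=
  mem_range_of_sq_add_mul_add (zero_mem _) (neg_mem h) (by ring)

lemma mul_mem_range_of_coeIdeal_eq {I : Ideal (𝓞 F)} {x : F} {𝔞 : FractionalIdeal (𝓞 F)⁰ F}
    (h : (I : FractionalIdeal (𝓞 F)⁰ F) = spanSingleton _ x * 𝔞) {δ : F} (hδ : δ ∈ 𝔞) :
    x * δ ∈ 𝒪 := by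
  obtain ⟨r, -, hr⟩ := (mem_coeIdeal _).mp (h ▸ mul_mem_mul (mem_spanSingleton_self _ x) hδ)
  exact ⟨r, hr⟩

lemma exists_mul_eq_one_sub_two_mul {I : Ideal (𝓞 F)} {x : F} {𝔞 : FractionalIdeal (𝓞 F)⁰ F}
    (h : (I : FractionalIdeal (𝓞 F)⁰ F) = spanSingleton _ x * 𝔞)
    (hI : IsCoprime I (Ideal.span {2})) : ∃ t ∈ 𝔞, ∃ m ∈ 𝒪, x * t = 1 - 2 * m := by
  obtain ⟨i, hi, j, hj, hij⟩ := Ideal.isCoprime_iff_exists.mp hI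
  obtain ⟨μ, rfl⟩ := Ideal.mem_span_singleton'.mp hj
  obtain ⟨t, ht, hti⟩ := mem_singleton_mul.mp (h ▸ (mem_coeIdeal _).mpr ⟨i, hi, rfl⟩)
  refine ⟨t, ht, algebraMap _ _ μ, ⟨μ, rfl⟩, ?_⟩
  rw [← hti, eq_sub_iff_add_eq, ← map_ofNat (algebraMap (𝓞 F) F) 2, ← map_mul, mul_comm, ← map_add,
    hij, map_one]

lemma forall_ne_sq_of_forall_neg (htr : ∀ φ : F →+* ℂ, ∀ x : F, (φ x).im = 0) {y : F}
    (hneg : ∀ τ : F →+* ℝ, τ y < 0) : ∀ m : F, y ≠ m ^ 2 := by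
  have hφ : ComplexEmbedding.IsReal (Classical.arbitrary (F →+* ℂ)) :=
    ComplexEmbedding.isReal_iff.mpr (RingHom.ext fun x => Complex.conj_eq_iff_im.mpr (htr _ x))
  rintro m rfl
  exact (hneg hφ.embedding).not_ge (by rw [map_pow]; positivity)

/-- `u + v√ξ` is integral, expressed through its trace `2u` and norm `u² - ξv²`. -/
def IsIntegralAddMulSqrt (ξ u v : F) : Prop :=
  2 * u ∈ 𝒪 ∧ u ^ 2 - ξ * v ^ 2 ∈ 𝒪

lemma IsIntegralAddMulSqrt.sub_mem {ξ u u' v : F} (h : IsIntegralAddMulSqrt ξ u v)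
    (h' : IsIntegralAddMulSqrt ξ u' v) : u - u' ∈ 𝒪 :=
  mem_range_of_sq_add_mul_add h'.1 (neg_mem (_root_.sub_mem h.2 h'.2)) (by ring)

/-- `2uaγ + w√ζ` is the trace of `(u + v√ξ) · γ(a + √η/2)` from `F(√ξ, √η)` to its subfield
`F(√ζ)`, where `w√ζ = γv√(ξη)`. -/
lemma IsIntegralAddMulSqrt.trace_mul {ξ η ζ u v w a γ : F} (h : IsIntegralAddMulSqrt ξ u v)
    (h₁ : 2 * a * γ ∈ 𝒪) (h₂ : (a ^ 2 - η / 4) * (γ * γ) ∈ 𝒪) (h₃ : η * (γ * γ) ∈ 𝒪)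
    (hw : ζ * w ^ 2 = ξ * η * (γ * v) ^ 2) : IsIntegralAddMulSqrt ζ (2 * u * (a * γ)) w := by
  refine ⟨by convert mul_mem h.1 h₁ using 1; ring, ?_⟩
  convert add_mem (mul_mem (mul_mem h.1 h.1) h₂) (mul_mem h₃ h.2) using 1
  rw [hw]
  ring

/-- `𝒪 + 𝔠·(a + √ξ/2)` is the integral closure of `𝒪` in `F(√ξ)`, in the coordinates `u + v√ξ`. -/
def IsMaxOrderPresentation (ξ : F) (𝔠 : FractionalIdeal (𝓞 F)⁰ F) (a : F) : Prop :=
  ∀ u v : F, (2 * v ∈ 𝔠 ∧ u - 2 * v * a ∈ 𝒪) ↔ IsIntegralAddMulSqrt ξ u v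

lemma isMaxOrderPresentation_iff {ξ a : F} {𝔠 : FractionalIdeal (𝓞 F)⁰ F} :
    IsMaxOrderPresentation ξ 𝔠 a ↔ (∀ γ ∈ 𝔠, 2 * a * γ ∈ 𝒪) ∧
      (∀ δ ∈ 𝔠 * 𝔠, (a ^ 2 - ξ / 4) * δ ∈ 𝒪) ∧
      ∀ u v, IsIntegralAddMulSqrt ξ u v → 2 * v ∈ 𝔠 := by
  have hω : ∀ γ, IsIntegralAddMulSqrt ξ (a * γ) (γ / 2) ↔
      2 * a * γ ∈ 𝒪 ∧ (a ^ 2 - ξ / 4) * γ ^ 2 ∈ 𝒪 := by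
    intro γ
    rw [IsIntegralAddMulSqrt, ← mul_assoc, show (a * γ) ^ 2 - ξ * (γ / 2) ^ 2
      = (a ^ 2 - ξ / 4) * γ ^ 2 by ring]
  constructor
  · intro h
    have hγ : ∀ γ ∈ 𝔠, 2 * a * γ ∈ 𝒪 ∧ (a ^ 2 - ξ / 4) * γ ^ 2 ∈ 𝒪 := fun γ hγ =>
      (hω γ).mp ((h _ _).mp ⟨by rwa [mul_div_cancel₀ _ two_ne_zero],
        by rw [show a * γ - 2 * (γ / 2) * a = 0 by ring]; exact zero_mem _⟩)
    refine ⟨fun γ hγ' => (hγ γ hγ').1, fun δ hδ => ?_, fun u v huv => ((h u v).mpr huv).1⟩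
    refine FractionalIdeal.mul_induction_on hδ (fun γ hγ₁ γ' hγ₂ => ?_) fun δ δ' hδ hδ' => ?_
    · refine mem_range_of_sq_mem ?_
      convert mul_mem (hγ γ hγ₁).2 (hγ γ' hγ₂).2 using 1
      ring
    · simpa only [mul_add] using add_mem hδ hδ'
  · rintro ⟨h₁, h₂, hmax⟩ u v
    constructor
    · rintro ⟨hv, hu⟩
      refine ⟨by convert add_mem (mul_mem (ofNat_mem _ 2) hu) (h₁ _ hv) using 1; ring, ?_⟩
      convert add_mem (add_mem (mul_mem hu hu) (mul_mem hu (h₁ _ hv)))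
        (h₂ _ (mul_mem_mul hv hv)) using 1
      ring
    · intro huv
      have hv := hmax u v huv
      have hω₂ := (hω (2 * v)).mpr ⟨h₁ _ hv, by simpa only [sq] using h₂ _ (mul_mem_mul hv hv)⟩
      rw [mul_div_cancel_left₀ _ two_ne_zero] at hω₂
      exact ⟨hv, by simpa only [mul_comm] using huv.sub_mem hω₂⟩

theorem IsMaxOrderPresentation.mul {l D a b : F} {𝔞 𝔟 : FractionalIdeal (𝓞 F)⁰ F}
    (ha : IsMaxOrderPresentation D 𝔞 a) (hb : IsMaxOrderPresentation l 𝔟 b)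
    (hD : ∀ δ ∈ 𝔞 * 𝔞, D * δ ∈ 𝒪) (hl : ∀ δ ∈ 𝔟 * 𝔟, l * δ ∈ 𝒪)
    (hcop : spanSingleton _ D * (𝔞 * 𝔞) + spanSingleton _ l * (𝔟 * 𝔟) = 1) :
    IsMaxOrderPresentation (l * D) (𝔞 * 𝔟) (2 * a * b) := by
  obtain ⟨ha₁, ha₂, ha₃⟩ := isMaxOrderPresentation_iff.mp ha
  obtain ⟨hb₁, hb₂, hb₃⟩ := isMaxOrderPresentation_iff.mp hb
  refine isMaxOrderPresentation_iff.mpr ⟨fun γ hγ => ?_, fun δ hδ => ?_, fun u v huv => ?_⟩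
  · convert mul_mul_mem_of_forall_mul_mem ha₁ hb₁ hγ using 1
    ring
  · rw [mul_mul_mul_comm] at hδ
    have hb₂' : ∀ δ ∈ 𝔟 * 𝔟, 4 * (b ^ 2 - l / 4) * δ ∈ 𝒪 := fun δ hδ => by
      simpa only [mul_assoc] using mul_mem (ofNat_mem _ 4) (hb₂ δ hδ)
    convert add_mem (add_mem (mul_mul_mem_of_forall_mul_mem hD hb₂ hδ)
      (mul_mul_mem_of_forall_mul_mem ha₂ hl hδ)) (mul_mul_mem_of_forall_mul_mem ha₂ hb₂' hδ) using 1
    ring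
  · have h𝔞 : spanSingleton _ (2 * v * D) * 𝔞 ≤ 𝔟 := spanSingleton_mul_le_iff.mpr fun α hα => by
      have hαα := mul_mem_mul hα hα
      convert hb₃ _ _ (huv.trace_mul (ha₁ α hα) (ha₂ _ hαα) (hD _ hαα)
        (w := v * (D * α)) (by ring)) using 1
      ring
    have h𝔟 : spanSingleton _ (2 * v * l) * 𝔟 ≤ 𝔞 := spanSingleton_mul_le_iff.mpr fun β hβ => by
      have hββ := mul_mem_mul hβ hβ
      convert ha₃ _ _ (huv.trace_mul (hb₁ β hβ) (hb₂ _ hββ) (hl _ hββ)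
        (w := v * (l * β)) (by ring)) using 1
      ring
    rw [← spanSingleton_le_iff_mem]
    calc spanSingleton _ (2 * v)
        = spanSingleton _ (2 * v) *
            (spanSingleton _ D * (𝔞 * 𝔞) + spanSingleton _ l * (𝔟 * 𝔟)) := by
          rw [hcop, mul_one]
      _ = spanSingleton _ (2 * v * D) * 𝔞 * 𝔞 + spanSingleton _ (2 * v * l) * 𝔟 * 𝔟 := by
          simp only [← spanSingleton_mul_spanSingleton]
          ring
      _ ≤ 𝔟 * 𝔞 + 𝔞 * 𝔟 := add_le_add (mul_le_mul' h𝔞 le_rfl) (mul_le_mul' h𝔟 le_rfl)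
      _ = 𝔞 * 𝔟 := by rw [mul_comm, ← sup_eq_add, sup_idem]

theorem IsMaxOrderPresentation.of_mul {l D b c t m : F} {𝔞 𝔟 : FractionalIdeal (𝓞 F)⁰ F}
    (hc : IsMaxOrderPresentation (l * D) (𝔞 * 𝔟) c) (hb : IsMaxOrderPresentation l 𝔟 b)
    (h𝔟 : 𝔟 ≠ 0) (hD : ∀ δ ∈ 𝔞 * 𝔞, D * δ ∈ 𝒪) (hl : ∀ δ ∈ 𝔟 * 𝔟, l * δ ∈ 𝒪)
    (ht : t ∈ 𝔟 * 𝔟) (hm : m ∈ 𝒪) (hlt : l * t = 1 - 2 * m) :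
    IsMaxOrderPresentation D 𝔞 (2 * b * c * t) := by
  obtain ⟨hc₁, hc₂, hc₃⟩ := isMaxOrderPresentation_iff.mp hc
  obtain ⟨hb₁, hb₂, -⟩ := isMaxOrderPresentation_iff.mp hb
  refine isMaxOrderPresentation_iff.mpr ⟨fun α hα => ?_, fun δ hδ => ?_, fun u v huv => ?_⟩
  · have htα : t * α ∈ 𝔟 * (𝔞 * 𝔟) := by
      simpa only [mul_comm, mul_left_comm] using mul_mem_mul ht hα
    convert mul_mul_mem_of_forall_mul_mem hb₁ hc₁ htα using 1
    ring
  · have htδ : t * δ ∈ 𝔞 * 𝔟 * (𝔞 * 𝔟) := by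
      simpa only [mul_mul_mul_comm 𝔞 𝔟, mul_comm (𝔟 * 𝔟)] using mul_mem_mul ht hδ
    have hlt' := hl t ht
    have hbt := hb₂ t ht
    have hct := hc₂ _ htδ
    -- `lt = 1 - 2m` turns `-D/4` into `(m² - m)D - l²t²D/4`
    convert add_mem (add_mem (add_mem (mul_mem (sub_mem (mul_mem hm hm) hm) (hD δ hδ))
      (mul_mem hlt' hct)) (mul_mem (mul_mem hlt' (hD δ hδ)) hbt))
      (mul_mem (mul_mem (ofNat_mem _ 4) hbt) hct) using 1
    linear_combination (D * δ / 4) * (l * t + 1 - 2 * m) * hlt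
  · have h : spanSingleton _ (2 * v) * 𝔟 ≤ 𝔞 * 𝔟 := spanSingleton_mul_le_iff.mpr fun β hβ => by
      have hββ := mul_mem_mul hβ hβ
      convert hc₃ _ _ (huv.trace_mul (hb₁ β hβ) (hb₂ _ hββ) (hl _ hββ)
        (w := v * β) (by ring)) using 1
      ring
    rw [← spanSingleton_le_iff_mem]
    calc spanSingleton _ (2 * v) = spanSingleton _ (2 * v) * 𝔟 * 𝔟⁻¹ := by
          rw [mul_assoc, mul_inv_cancel₀ h𝔟, mul_one]
      _ ≤ 𝔞 * 𝔟 * 𝔟⁻¹ := mul_le_mul' h le_rfl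
      _ = 𝔞 := by rw [mul_assoc, mul_inv_cancel₀ h𝔟, mul_one]

section OrderSet

variable {K : Type*} [Field K] [Algebra F K]

lemma add_mul_mem_orderSet_iff {s : K} (hs : s ∉ Set.range (algebraMap F K))
    (𝔠 : FractionalIdeal (𝓞 F)⁰ F) (a u v : F) :
    algebraMap F K u + algebraMap F K v * s ∈
        orderSet F 𝔠 (algebraMap F K a + algebraMap F K 2⁻¹ * s) ↔
      2 * v ∈ 𝔠 ∧ u - 2 * v * a ∈ 𝒪 := by
  constructor
  · rintro ⟨c, γ, hγ, h⟩
    have h' : algebraMap F K u + algebraMap F K v * s =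
        algebraMap F K (algebraMap (𝓞 F) F c + γ * a) + algebraMap F K (γ * 2⁻¹) * s := by
      rw [h, map_add, map_mul, map_mul]
      ring
    obtain ⟨rfl, rfl⟩ := eq_and_eq_of_add_mul_eq hs h'
    refine ⟨by rwa [mul_left_comm, mul_inv_cancel₀ two_ne_zero, mul_one], c, ?_⟩
    field_simp
    ring
  · rintro ⟨hv, c, hc⟩
    refine ⟨c, 2 * v, hv, ?_⟩
    have h2 : (2 : K) * algebraMap F K 2⁻¹ = 1 := by
      rw [← map_ofNat (algebraMap F K) 2, ← map_mul, mul_inv_cancel₀ two_ne_zero, map_one]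
    rw [hc, map_sub, map_mul, map_mul, map_ofNat]
    linear_combination (-(algebraMap F K v * s)) * h2

variable [Algebra (𝓞 F) K] [IsScalarTower (𝓞 F) F K]

lemma add_mul_mem_integralClosure_iff {σ : K ≃ₐ[F] K} {s : K} {ξ : F}
    (hs2 : s ^ 2 = algebraMap F K ξ) (hσs : σ s = -s) (u v : F) :
    algebraMap F K u + algebraMap F K v * s ∈ integralClosure (𝓞 F) K ↔
      IsIntegralAddMulSqrt ξ u v := by
  set x := algebraMap F K u + algebraMap F K v * s
  have hσx := σ.apply_add_mul_of_apply_eq_neg hσs u v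
  have htr : x + σ x = algebraMap F K (2 * u) := by
    rw [hσx, map_mul, map_ofNat]
    ring
  have hnorm : x * σ x = algebraMap F K (u ^ 2 - ξ * v ^ 2) := by
    rw [hσx, map_sub, map_mul, map_pow, map_pow, ← hs2]
    ring
  have mem_of_isIntegral {y : F} (hy : IsIntegral (𝓞 F) (algebraMap F K y)) : y ∈ 𝒪 :=
    IsIntegrallyClosed.isIntegral_iff.mp
      ((isIntegral_algebraMap_iff (algebraMap F K).injective).mp hy)
  constructor
  · intro hx
    have hσx' : IsIntegral (𝓞 F) (σ x) := hx.map (σ.restrictScalars (𝓞 F))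
    exact ⟨mem_of_isIntegral (htr ▸ hx.add hσx'), mem_of_isIntegral (hnorm ▸ hx.mul hσx')⟩
  · rintro ⟨⟨r₁, hr₁⟩, ⟨r₀, hr₀⟩⟩
    refine isIntegral_of_sq_add_mul_add (-r₁) r₀ ?_
    rw [IsScalarTower.algebraMap_apply (𝓞 F) F K, IsScalarTower.algebraMap_apply (𝓞 F) F K,
      map_neg, hr₁, hr₀, map_neg, ← htr, ← hnorm]
    ring

lemma orderSet_eq_integralClosure_iff (hK : Module.finrank F K = 2) {σ : K ≃ₐ[F] K} {s : K}
    (hs : s ∉ Set.range (algebraMap F K)) {ξ : F} (hs2 : s ^ 2 = algebraMap F K ξ)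
    (hσs : σ s = -s) (𝔠 : FractionalIdeal (𝓞 F)⁰ F) (a : F) :
    orderSet F 𝔠 (algebraMap F K a + algebraMap F K 2⁻¹ * s) = integralClosure (𝓞 F) K ↔
      IsMaxOrderPresentation ξ 𝔠 a := by
  constructor
  · intro h u v
    rw [← add_mul_mem_orderSet_iff hs, h, SetLike.mem_coe,
      add_mul_mem_integralClosure_iff hs2 hσs]
  · intro h
    ext x
    obtain ⟨u, v, rfl⟩ := exists_eq_add_mul hK hs x
    rw [add_mul_mem_orderSet_iff hs, SetLike.mem_coe, add_mul_mem_integralClosure_iff hs2 hσs]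
    exact h u v

lemma IsFundDisc.exists_isMaxOrderPresentation (hK : Module.finrank F K = 2)
    {σ : K ≃ₐ[F] K} (hσ : σ ≠ AlgEquiv.refl) {ξ : F} (hξ : ∀ m : F, ξ ≠ m ^ 2)
    {𝔠 : FractionalIdeal (𝓞 F)⁰ F} (h : IsFundDisc F σ ξ 𝔠) :
    ∃ a, IsMaxOrderPresentation ξ 𝔠 a := by
  obtain ⟨ω, hω, S, hS, hS'⟩ := h
  set s := ω - σ ω with hs_def
  have hs := not_mem_range_of_sq_eq hξ hω
  have hσs := σ.apply_eq_neg_of_sq_eq hK hσ hs hω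
  obtain ⟨u, v, hωuv⟩ := exists_eq_add_mul hK hs ω
  have hσω : σ ω = algebraMap F K u - algebraMap F K v * s := by
    conv_lhs => rw [hωuv]
    exact σ.apply_add_mul_of_apply_eq_neg hσs u v
  have h2v : algebraMap F K 0 + algebraMap F K 1 * s =
      algebraMap F K 0 + algebraMap F K (2 * v) * s := by
    rw [map_zero, map_one, map_mul, map_ofNat, zero_add, zero_add, one_mul]
    calc s = ω - σ ω := hs_def
      _ = 2 * algebraMap F K v * s := by
        rw [hσω]
        nth_rewrite 1 [hωuv]
        ring
  have hv : v = 2⁻¹ := eq_inv_of_mul_eq_one_right (eq_and_eq_of_add_mul_eq hs h2v).2.symm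
  rw [hωuv, hv] at hS
  exact ⟨u, (orderSet_eq_integralClosure_iff hK hs hω hσs 𝔠 u).mp (hS.symm.trans hS')⟩

lemma isFundDisc_of_isMaxOrderPresentation (hK : Module.finrank F K = 2)
    {σ : K ≃ₐ[F] K} (hσ : σ ≠ AlgEquiv.refl) {ξ : F} (hξ : ∀ m : F, ξ ≠ m ^ 2)
    (hsqrt : ∃ s : K, s ^ 2 = algebraMap F K ξ) {𝔠 : FractionalIdeal (𝓞 F)⁰ F} {a : F}
    (h : IsMaxOrderPresentation ξ 𝔠 a) : IsFundDisc F σ ξ 𝔠 := by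
  obtain ⟨s, hs2⟩ := hsqrt
  have hs := not_mem_range_of_sq_eq hξ hs2
  have hσs := σ.apply_eq_neg_of_sq_eq hK hσ hs hs2
  set ω := algebraMap F K a + algebraMap F K 2⁻¹ * s
  have hω : ω - σ ω = s := by
    rw [σ.apply_add_mul_of_apply_eq_neg hσs, add_sub_sub_cancel, ← two_mul, ← mul_assoc,
      ← map_ofNat (algebraMap F K) 2, ← map_mul, mul_inv_cancel₀ two_ne_zero, map_one, one_mul]
  exact ⟨_, by rw [hω, hs2], (integralClosure (𝓞 F) K).toSubring,
    ((orderSet_eq_integralClosure_iff hK hs hs2 hσs 𝔠 a).mpr h).symm, rfl⟩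

end OrderSet

end NumberField

end IntegersOfField

theorem statement_1_general
    (F : Type*) [Field F] [NumberField F]
    (htr : ∀ φ : F →+* ℂ, ∀ x : F, (φ x).im = 0)
    (Kl : Type*) [Field Kl] [Algebra F Kl] [Algebra (𝓞 F) Kl] [IsScalarTower (𝓞 F) F Kl]
    (hKl : Module.finrank F Kl = 2)
    (σl : Kl ≃ₐ[F] Kl) (hσl : σl ≠ AlgEquiv.refl)
    (KD : Type*) [Field KD] [Algebra F KD] [Algebra (𝓞 F) KD] [IsScalarTower (𝓞 F) F KD]
    (hKD : Module.finrank F KD = 2)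
    (σD : KD ≃ₐ[F] KD) (hσD : σD ≠ AlgEquiv.refl)
    (KΔ : Type*) [Field KΔ] [Algebra F KΔ] [Algebra (𝓞 F) KΔ] [IsScalarTower (𝓞 F) F KΔ]
    (hKΔ : Module.finrank F KΔ = 2)
    (σΔ : KΔ ≃ₐ[F] KΔ) (hσΔ : σΔ ≠ AlgEquiv.refl)
    (l D : F) (hlns : ∀ m : F, l ≠ m ^ 2)
    (hDns : ∀ m : F, D ≠ m ^ 2)
    (hsqrtD : ∃ s : KD, s ^ 2 = algebraMap F KD D)
    (hsqrtΔ : ∃ s : KΔ, s ^ 2 = algebraMap F KΔ (l * D))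
    (𝔞 𝔟 : FractionalIdeal (nonZeroDivisors (𝓞 F)) F) (h𝔟0 : 𝔟 ≠ 0)
    (hfund : IsFundDisc F σl l 𝔟)
    (hint : ∃ I : Ideal (𝓞 F),
      (I : FractionalIdeal (nonZeroDivisors (𝓞 F)) F)
          = FractionalIdeal.spanSingleton (nonZeroDivisors (𝓞 F)) l * 𝔟 ^ 2 ∧
        IsCoprime I (Ideal.span {(2 : 𝓞 F)}))
    (hneg : ∀ τ : F →+* ℝ, τ (l * D) < 0)
    (hcop : ∃ ID Il : Ideal (𝓞 F),
      (ID : FractionalIdeal (nonZeroDivisors (𝓞 F)) F)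
          = FractionalIdeal.spanSingleton (nonZeroDivisors (𝓞 F)) D * 𝔞 ^ 2 ∧
      (Il : FractionalIdeal (nonZeroDivisors (𝓞 F)) F)
          = FractionalIdeal.spanSingleton (nonZeroDivisors (𝓞 F)) l * 𝔟 ^ 2 ∧
      IsCoprime ID Il) :
    IsFundDisc F σD D 𝔞 ↔ IsFundDisc F σΔ (l * D) (𝔞 * 𝔟) := by
  obtain ⟨I, hI, hI2⟩ := hint
  obtain ⟨ID, Il, hID, hIl, hDl⟩ := hcop
  rw [sq] at hI hID hIl
  obtain ⟨b, hb⟩ := hfund.exists_isMaxOrderPresentation hKl hσl hlns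
  obtain ⟨t, ht, m, hm, hlt⟩ := exists_mul_eq_one_sub_two_mul hI hI2
  have hD : ∀ δ ∈ 𝔞 * 𝔞, D * δ ∈ (algebraMap (𝓞 F) F).range :=
    fun _ hδ => mul_mem_range_of_coeIdeal_eq hID hδ
  have hl : ∀ δ ∈ 𝔟 * 𝔟, l * δ ∈ (algebraMap (𝓞 F) F).range :=
    fun _ hδ => mul_mem_range_of_coeIdeal_eq hIl hδ
  have hsum : spanSingleton _ D * (𝔞 * 𝔞) + spanSingleton _ l * (𝔟 * 𝔟) = 1 := by
    rw [← hID, ← hIl, ← coeIdeal_sup, Ideal.isCoprime_iff_sup_eq.mp hDl, coeIdeal_top]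
  have hΔ := forall_ne_sq_of_forall_neg htr hneg
  constructor
  · intro h
    obtain ⟨a, ha⟩ := h.exists_isMaxOrderPresentation hKD hσD hDns
    exact isFundDisc_of_isMaxOrderPresentation hKΔ hσΔ hΔ hsqrtΔ (ha.mul hb hD hl hsum)
  · intro h
    obtain ⟨c, hc⟩ := h.exists_isMaxOrderPresentation hKΔ hσΔ hΔ
    exact isFundDisc_of_isMaxOrderPresentation hKD hσD hDns hsqrtD
      (hc.of_mul hb h𝔟0 hD hl ht hm hlt)

/-- assuming moreover that `D𝔞²` and `l𝔟²` are coprime,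
`(D,𝔞)` is fundamental iff `(Δ,𝔠) = (lD, 𝔞𝔟)` is fundamental. -/
theorem statement_1
    (F : Type*) [Field F] [NumberField F]
    (htr : ∀ φ : F →+* ℂ, ∀ x : F, (φ x).im = 0)
    (Kl : Type*) [Field Kl] [Algebra F Kl] [Algebra (𝓞 F) Kl] [IsScalarTower (𝓞 F) F Kl]
    [FiniteDimensional F Kl] (hKl : Module.finrank F Kl = 2)
    (σl : Kl ≃ₐ[F] Kl) (hσl : σl ≠ AlgEquiv.refl)
    (KD : Type*) [Field KD] [Algebra F KD] [Algebra (𝓞 F) KD] [IsScalarTower (𝓞 F) F KD]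
    [FiniteDimensional F KD] (hKD : Module.finrank F KD = 2)
    (σD : KD ≃ₐ[F] KD) (hσD : σD ≠ AlgEquiv.refl)
    (KΔ : Type*) [Field KΔ] [Algebra F KΔ] [Algebra (𝓞 F) KΔ] [IsScalarTower (𝓞 F) F KΔ]
    [FiniteDimensional F KΔ] (hKΔ : Module.finrank F KΔ = 2)
    (σΔ : KΔ ≃ₐ[F] KΔ) (hσΔ : σΔ ≠ AlgEquiv.refl)
    (l D : F) (hl0 : l ≠ 0) (hlns : ∀ m : F, l ≠ m ^ 2)
    (hD0 : D ≠ 0) (hDns : ∀ m : F, D ≠ m ^ 2)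
    (hsqrtl : ∃ s : Kl, s ^ 2 = algebraMap F Kl l)
    (hsqrtD : ∃ s : KD, s ^ 2 = algebraMap F KD D)
    (hsqrtΔ : ∃ s : KΔ, s ^ 2 = algebraMap F KΔ (l * D))
    (𝔞 𝔟 : FractionalIdeal (nonZeroDivisors (𝓞 F)) F) (h𝔞0 : 𝔞 ≠ 0) (h𝔟0 : 𝔟 ≠ 0)
    (hfund : IsFundDisc F σl l 𝔟)
    (hint : ∃ I : Ideal (𝓞 F),
      (I : FractionalIdeal (nonZeroDivisors (𝓞 F)) F)
          = FractionalIdeal.spanSingleton (nonZeroDivisors (𝓞 F)) l * 𝔟 ^ 2 ∧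
        IsCoprime I (Ideal.span {(2 : 𝓞 F)}))
    (hneg : ∀ τ : F →+* ℝ, τ (l * D) < 0)
    (hmem : D ∈ 𝔞⁻¹ * 𝔞⁻¹)
    (hcop : ∃ ID Il : Ideal (𝓞 F),
      (ID : FractionalIdeal (nonZeroDivisors (𝓞 F)) F)
          = FractionalIdeal.spanSingleton (nonZeroDivisors (𝓞 F)) D * 𝔞 ^ 2 ∧
      (Il : FractionalIdeal (nonZeroDivisors (𝓞 F)) F)
          = FractionalIdeal.spanSingleton (nonZeroDivisors (𝓞 F)) l * 𝔟 ^ 2 ∧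
      IsCoprime ID Il) :
    IsFundDisc F σD D 𝔞 ↔ IsFundDisc F σΔ (l * D) (𝔞 * 𝔟) :=
  statement_1_general F htr Kl hKl σl hσl KD hKD σD hσD KΔ hKΔ σΔ hσΔ l D hlns hDns hsqrtD hsqrtΔ 𝔞
    𝔟 h𝔟0 hfund hint hneg hcop
end

section
/- Let F be a number field with ring of integers 𝒪, let K be a field extension of F of degree 2, let ω ∈ K \ F, and let 𝔞 be a fractional ideal of F. Then the 𝒪-submodule 𝒪 + 𝔞·ω of K (where 𝔞·ω = {αω : α ∈ 𝔞}) is a subring of K if and only if Tr_{K/F}(ω) ∈ 𝔞⁻¹ and N_{K/F}(ω) ∈ 𝔞⁻². -/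
open NumberField

/-!
Every `ω` in a quadratic extension satisfies `ω² = Tr(ω) ω - N(ω)` (Cayley–Hamilton). The set
`𝒪 + 𝔞ω` is an additive group containing `1`, so it is a ring iff it contains all products
`(αω)(βω) = -αβ N(ω) + αβ Tr(ω) ω` with `α, β ∈ 𝔞`. Since `1, ω` are linearly independent over `F`,
this means `𝔞² Tr(ω) ⊆ 𝔞` and `𝔞² N(ω) ⊆ 𝒪`, i.e. `Tr(ω) ∈ 𝔞⁻¹` and `N(ω) ∈ 𝔞⁻²` because `𝔞`
is invertible.
-/

open Module
open scoped nonZeroDivisors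

theorem Algebra.sq_eq_trace_mul_sub_norm {R S : Type*} [CommRing R] [Nontrivial R] [CommRing S]
    [Algebra R S] [Module.Free R S] [Module.Finite R S] (h : finrank R S = 2) (x : S) :
    x ^ 2 = algebraMap R S (Algebra.trace R S x) * x - algebraMap R S (Algebra.norm R x) := by
  have hx := Algebra.aeval_self_charpoly_lmul (R := R) x
  rw [← LinearMap.charpoly_toMatrix _ (finBasisOfFinrankEq R S h), ← Algebra.leftMulMatrix_apply,
    Matrix.charpoly_fin_two, ← Algebra.trace_eq_matrix_trace, ← Algebra.norm_eq_matrix_det] at hx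
  simp only [map_add, map_sub, map_mul, map_pow, Polynomial.aeval_X, Polynomial.aeval_C] at hx
  linear_combination hx

namespace FractionalIdeal

theorem neg_mem_iff {R L : Type*} [CommRing R] [CommRing L] [Algebra R L] {S : Submonoid R}
    {I : FractionalIdeal S L} {x : L} : -x ∈ I ↔ x ∈ I :=
  I.coeToSubmodule.neg_mem_iff

variable {R L : Type*} [CommRing R] [IsDedekindDomain R] [Field L] [Algebra R L]
  [IsFractionRing R L] {I : FractionalIdeal R⁰ L}

theorem mem_mul_inv_iff (hI : I ≠ 0) (J : FractionalIdeal R⁰ L) {x : L} :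
    x ∈ J * I⁻¹ ↔ ∀ y ∈ I, x * y ∈ J := by
  rw [← div_eq_mul_inv, mem_div_iff_of_ne_zero hI]

theorem mem_mul_inv_mul_inv_iff (hI : I ≠ 0) (J : FractionalIdeal R⁰ L) {x : L} :
    x ∈ J * I⁻¹ * I⁻¹ ↔ ∀ y ∈ I, ∀ z ∈ I, x * y * z ∈ J := by
  simp only [mem_mul_inv_iff hI]

end FractionalIdeal

section OrderSet

variable {F : Type*} [Field F] [NumberField F] {K : Type*} [Field K] [Algebra F K]
  {𝔞 : FractionalIdeal (𝓞 F)⁰ F} {ω : K}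

theorem algebraMap_add_mul_mem_orderSet_iff (hω : ω ∉ Set.range (algebraMap F K)) {x y : F} :
    algebraMap F K x + algebraMap F K y * ω ∈ orderSet F 𝔞 ω ↔
      x ∈ (1 : FractionalIdeal (𝓞 F)⁰ F) ∧ y ∈ 𝔞 := by
  rw [FractionalIdeal.mem_one_iff]
  refine ⟨fun ⟨c, α, hα, h⟩ ↦ ?_, fun ⟨⟨c, hc⟩, hy⟩ ↦ ⟨c, y, hy, by rw [hc]⟩⟩
  have hli : LinearIndependent F ![(1 : K), ω] :=
    (LinearIndependent.pair_iff' one_ne_zero).2 fun a ha ↦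
      hω ⟨a, by simpa [Algebra.smul_def] using ha⟩
  have hcoord := LinearIndependent.pair_iff.1 hli (x - algebraMap (𝓞 F) F c) (y - α) (by
    simp only [Algebra.smul_def, map_sub, mul_one]
    linear_combination h)
  rw [sub_eq_zero, sub_eq_zero] at hcoord
  exact ⟨⟨c, hcoord.1.symm⟩, hcoord.2 ▸ hα⟩

theorem add_mem_orderSet {x y : K} (hx : x ∈ orderSet F 𝔞 ω) (hy : y ∈ orderSet F 𝔞 ω) :
    x + y ∈ orderSet F 𝔞 ω := by
  obtain ⟨c, α, hα, rfl⟩ := hx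
  obtain ⟨c', α', hα', rfl⟩ := hy
  exact ⟨c + c', α + α', 𝔞.coeToSubmodule.add_mem hα hα', by simp only [map_add]; ring⟩

theorem neg_mem_orderSet {x : K} (hx : x ∈ orderSet F 𝔞 ω) : -x ∈ orderSet F 𝔞 ω := by
  obtain ⟨c, α, hα, rfl⟩ := hx
  exact ⟨-c, -α, 𝔞.coeToSubmodule.neg_mem hα, by simp only [map_neg]; ring⟩

theorem mul_mem_orderSet
    (h : ∀ α ∈ 𝔞, ∀ β ∈ 𝔞, algebraMap F K α * ω * (algebraMap F K β * ω) ∈ orderSet F 𝔞 ω)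
    {x y : K} (hx : x ∈ orderSet F 𝔞 ω) (hy : y ∈ orderSet F 𝔞 ω) :
    x * y ∈ orderSet F 𝔞 ω := by
  obtain ⟨c, α, hα, rfl⟩ := hx
  obtain ⟨c', α', hα', rfl⟩ := hy
  have hlinear : algebraMap F K (algebraMap (𝓞 F) F (c * c')) +
      algebraMap F K (algebraMap (𝓞 F) F c * α' + algebraMap (𝓞 F) F c' * α) * ω ∈
        orderSet F 𝔞 ω :=
    ⟨c * c', _, 𝔞.coeToSubmodule.add_mem
      (by simpa [Algebra.smul_def] using 𝔞.coeToSubmodule.smul_mem c hα')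
      (by simpa [Algebra.smul_def] using 𝔞.coeToSubmodule.smul_mem c' hα), rfl⟩
  convert add_mem_orderSet hlinear (h α hα α' hα') using 1
  simp only [map_add, map_mul]
  ring

theorem exists_subring_orderSet_iff :
    (∃ S : Subring K, (S : Set K) = orderSet F 𝔞 ω) ↔
      ∀ α ∈ 𝔞, ∀ β ∈ 𝔞, algebraMap F K α * ω * (algebraMap F K β * ω) ∈ orderSet F 𝔞 ω := by
  refine ⟨fun ⟨S, hS⟩ α hα β hβ ↦ ?_, fun h ↦ ?_⟩
  · have hmem : ∀ γ ∈ 𝔞, algebraMap F K γ * ω ∈ S := fun γ hγ ↦ by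
      rw [← SetLike.mem_coe, hS]
      exact ⟨0, γ, hγ, by simp⟩
    rw [← hS]
    exact mul_mem (hmem α hα) (hmem β hβ)
  · exact ⟨{ carrier := orderSet F 𝔞 ω
             zero_mem' := ⟨0, 0, 𝔞.zero_mem, by simp⟩
             one_mem' := ⟨1, 0, 𝔞.zero_mem, by simp⟩
             add_mem' := add_mem_orderSet
             neg_mem' := neg_mem_orderSet
             mul_mem' := mul_mem_orderSet h }, rfl⟩

end OrderSet

/-- `𝒪 + 𝔞·ω` is a subring of `K` iff `Tr_{K/F}(ω) ∈ 𝔞⁻¹` and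
`N_{K/F}(ω) ∈ 𝔞⁻²`. -/
theorem statement_3
    (F : Type*) [Field F] [NumberField F]
    (K : Type*) [Field K] [Algebra F K]
    [FiniteDimensional F K] (hK : Module.finrank F K = 2)
    (ω : K) (hω : ω ∉ Set.range (algebraMap F K))
    (𝔞 : FractionalIdeal (nonZeroDivisors (𝓞 F)) F) (h𝔞0 : 𝔞 ≠ 0) :
    (∃ S : Subring K, (S : Set K) = orderSet F 𝔞 ω) ↔
      (Algebra.trace F K ω ∈ 𝔞⁻¹ ∧ Algebra.norm F ω ∈ 𝔞⁻¹ * 𝔞⁻¹) := by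
  set t := Algebra.trace F K ω
  set n := Algebra.norm F ω
  have hsq : ∀ α β : F, algebraMap F K α * ω * (algebraMap F K β * ω) =
      algebraMap F K (-(n * α * β)) + algebraMap F K (t * α * β) * ω := fun α β ↦ by
    simp only [map_neg, map_mul]
    linear_combination algebraMap F K α * algebraMap F K β * Algebra.sq_eq_trace_mul_sub_norm hK ω
  have ht : t ∈ 𝔞⁻¹ ↔ ∀ α ∈ 𝔞, ∀ β ∈ 𝔞, t * α * β ∈ 𝔞 := by
    rw [← FractionalIdeal.mem_mul_inv_mul_inv_iff h𝔞0, mul_inv_cancel₀ h𝔞0, one_mul]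
  have hn : n ∈ 𝔞⁻¹ * 𝔞⁻¹ ↔ ∀ α ∈ 𝔞, ∀ β ∈ 𝔞, n * α * β ∈ (1 : FractionalIdeal (𝓞 F)⁰ F) := by
    rw [← FractionalIdeal.mem_mul_inv_mul_inv_iff h𝔞0, one_mul]
  simp only [exists_subring_orderSet_iff, hsq, algebraMap_add_mul_mem_orderSet_iff hω,
    FractionalIdeal.neg_mem_iff, ht, hn, imp_and, forall_and]
  exact and_comm
end

section
/- Let F be a totally real number field with ring of integers 𝒪, let B = QuaternionAlgebra F a b with a, b ∈ F^× satisfying τ(a) < 0 and τ(b) < 0 for every real embedding τ of F, and let R ⊆ B be an 𝒪-order, i.e. a subring of B containing 𝒪, finitely generated as an 𝒪-module, and spanning B over F. Then the quotient group R^×/𝒪^× of the unit group of R by the (central) unit group of 𝒪 is finite. -/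
/-!
The reduced norm `nrd x = x * star x` is multiplicative, and on an order it takes values that are
integral over `ℤ`; hence it maps `R^×` into `𝒪^×`. A scalar unit `η ∈ 𝒪^×` has `nrd η = η²`, and
`𝒪^×/(𝒪^×)²` is finite by Dirichlet's unit theorem, so every class of `R^×/𝒪^×` has a
representative whose reduced norm lies in a fixed finite set, hence is bounded at every
embedding. Because `B` is totally definite, `τ ∘ nrd` is a positive definite diagonal form for
every real `τ`, so such representatives have coordinates bounded at all embeddings; since they
also lie in a lattice, there are only finitely many.
-/

open Quaternion NumberField

open scoped IsMulCommutative in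
theorem IsIntegral.mul_of_commute {R A : Type*} [CommRing R] [Ring A] [Algebra R A] {x y : A}
    (hxy : Commute x y) (hx : IsIntegral R x) (hy : IsIntegral R y) : IsIntegral R (x * y) := by
  let S := Algebra.adjoin R {x, y}
  have : IsMulCommutative S := Algebra.isMulCommutative_adjoin R <| by
    simp only [Set.mem_insert_iff, Set.mem_singleton_iff]
    rintro _ (rfl | rfl) _ (rfl | rfl) <;> first | rfl | exact hxy.eq | exact hxy.eq.symm
  have hS {z : A} (hz : z ∈ S) (h : IsIntegral R z) : IsIntegral R (⟨z, hz⟩ : S) :=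
    (isIntegral_algHom_iff S.val Subtype.val_injective).mp h
  exact (isIntegral_algHom_iff S.val Subtype.val_injective).mpr
    ((hS (Algebra.subset_adjoin (by simp)) hx).mul (hS (Algebra.subset_adjoin (by simp)) hy))

theorem Subring.isIntegral_of_mem_of_fg_span {O A : Type*} [CommRing O] [Module.Finite ℤ O]
    [Ring A] [Algebra O A] (R : Subring A) (hR : (Submodule.span O (R : Set A)).FG) {x : A}
    (hx : x ∈ R) : IsIntegral ℤ x := by
  have := isNoetherian_of_fg_of_noetherian _ (hR.restrictScalars (R := ℤ))
  exact IsIntegral.of_mem_of_fg (subalgebraOfSubring R)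
    (Submodule.FG.of_le_of_isNoetherian (T := (Submodule.span O (R : Set A)).restrictScalars ℤ)
      fun _ hy => Submodule.subset_span hy) x hx

theorem exists_finite_mul_sq (G : Type*) [CommGroup G] [Group.FG G] :
    ∃ T : Set G, T.Finite ∧ ∀ g, ∃ t ∈ T, ∃ h, g = t * h ^ 2 := by
  have := Subgroup.finiteIndex_range_powMonoidHom_of_fg G two_ne_zero
  refine ⟨Set.range fun q : G ⧸ (powMonoidHom 2 : G →* G).range => q.out, Set.finite_range _,
    fun g => ⟨_, ⟨g, rfl⟩, ?_⟩⟩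
  obtain ⟨⟨_, h, rfl⟩, hh⟩ := QuotientGroup.mk_out_eq_mul (powMonoidHom 2 : G →* G).range g
  exact ⟨h⁻¹, by simp [hh]⟩

theorem QuotientGroup.finite_of_forall_exists_mul_mem {G : Type*} [Group G] (H : Subgroup G)
    {S : Set G} (hS : S.Finite) (h : ∀ g, ∃ k ∈ H, g * k ∈ S) : Finite (G ⧸ H) := by
  have := hS.to_subtype
  refine Finite.of_surjective (fun s : S => (s : G ⧸ H)) fun q => ?_
  obtain ⟨g, rfl⟩ := QuotientGroup.mk_surjective q
  obtain ⟨k, hk, hgk⟩ := h g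
  exact ⟨⟨g * k, hgk⟩, QuotientGroup.mk_mul_of_mem g hk⟩

namespace NumberField

theorem isTotallyReal_of_forall_im_eq_zero {K : Type*} [Field K]
    (h : ∀ φ : K →+* ℂ, ∀ x, (φ x).im = 0) : IsTotallyReal K where
  isReal _ := InfinitePlace.isReal_iff.mpr <| ComplexEmbedding.isReal_iff.mpr <|
    RingHom.ext fun x => Complex.ext (by simp) (by simp [h])

theorem ComplexEmbedding.IsReal.norm_apply {K : Type*} [Field K] {φ : K →+* ℂ}
    (hφ : ComplexEmbedding.IsReal φ) (x : K) : ‖φ x‖ = |hφ.embedding x| := by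
  rw [← hφ.coe_embedding_apply, Complex.norm_real, Real.norm_eq_abs]

theorem finite_setOf_mem_forall_norm_le {K : Type*} [Field K] [NumberField K]
    {N : Submodule (𝓞 K) K} (hN : N.FG) (B : (K →+* ℂ) → ℝ) :
    {y | y ∈ N ∧ ∀ φ : K →+* ℂ, ‖φ y‖ ≤ B φ}.Finite := by
  obtain ⟨d, hd, hdN⟩ := FractionalIdeal.isFractional_of_fg (S := nonZeroDivisors (𝓞 K)) hN
  obtain ⟨C, hC⟩ := (Set.finite_range fun φ : K →+* ℂ => ‖φ (d : K)‖ * B φ).bddAbove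
  have hd0 : (d : K) ≠ 0 := by simpa using nonZeroDivisors.ne_zero hd
  refine ((Embeddings.finite_of_norm_le K ℂ C).preimage (mul_right_injective₀ hd0).injOn).subset ?_
  rintro y ⟨hy, hB⟩
  refine ⟨?_, fun φ => ?_⟩
  · obtain ⟨z, hz⟩ := hdN y hy
    have hdy : (d : K) * y = z := by rw [← Algebra.smul_def, ← hz]
    simpa only [hdy] using RingOfIntegers.isIntegral_coe z
  · rw [map_mul, norm_mul]
    exact (mul_le_mul_of_nonneg_left (hB φ) (norm_nonneg _)).trans (hC ⟨φ, rfl⟩)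

end NumberField

namespace QuaternionAlgebra

section CommRing

variable {R : Type*} [CommRing R] {c₁ c₂ c₃ : R}

def nrd : ℍ[R,c₁,c₂,c₃] →* R where
  toFun x := (x * star x).re
  map_one' := by simp
  map_mul' x y := coe_injective <| by
    conv_lhs => rw [← mul_star_eq_coe, star_mul, mul_assoc, ← mul_assoc y, y.mul_star_eq_coe,
      coe_commutes, ← mul_assoc, x.mul_star_eq_coe, ← coe_mul]

theorem coe_nrd (x : ℍ[R,c₁,c₂,c₃]) : ((nrd x : R) : ℍ[R,c₁,c₂,c₃]) = x * star x :=
  (mul_star_eq_coe x).symm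

theorem nrd_coe (r : R) : nrd (r : ℍ[R,c₁,c₂,c₃]) = r ^ 2 := by
  simp [nrd, sq]

def nrdCoeff (c₁ c₃ : R) : Fin 4 → R := ![1, -c₁, -c₃, c₁ * c₃]

theorem nrd_eq_sum (x : ℍ[R,c₁,0,c₃]) :
    nrd x = ∑ i, nrdCoeff c₁ c₃ i * equivTuple c₁ 0 c₃ x i ^ 2 := by
  simp only [nrd, MonoidHom.coe_mk, OneHom.coe_mk, re_mul, re_star, imI_star, imJ_star, imK_star,
    nrdCoeff, equivTuple, Equiv.coe_fn_mk, Fin.sum_univ_four, Matrix.cons_val_zero,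
    Matrix.cons_val_one, Matrix.cons_val]
  ring

theorem isIntegral_star {S : Type*} [CommRing S] [Algebra S R] {x : ℍ[R,c₁,c₂,c₃]}
    (hx : IsIntegral S x) : IsIntegral S (star x) := by
  obtain ⟨p, hp, hpx⟩ :=
    hx.map ((starAe (R := R) (c₁ := c₁) (c₂ := c₂) (c₃ := c₃)).toAlgHom.restrictScalars S)
  refine ⟨p, hp, MulOpposite.op_injective ?_⟩
  rw [← Polynomial.aeval_def, ← Polynomial.aeval_op_apply]
  simpa [Polynomial.aeval_def] using hpx

theorem isIntegral_nrd {S : Type*} [CommRing S] [Algebra S R] {x : ℍ[R,c₁,c₂,c₃]}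
    (hx : IsIntegral S x) : IsIntegral S (nrd x) := by
  have h := IsIntegral.mul_of_commute (star_comm_self' x).symm hx (isIntegral_star hx)
  rw [← coe_nrd] at h
  exact (isIntegral_algHom_iff ((Algebra.ofId R ℍ[R,c₁,c₂,c₃]).restrictScalars S)
    coe_injective).mp h

theorem map_nrdCoeff_pos (τ : R →+* ℝ) (h₁ : τ c₁ < 0) (h₃ : τ c₃ < 0) (i : Fin 4) :
    0 < τ (nrdCoeff c₁ c₃ i) := by
  fin_cases i <;> simp [nrdCoeff, mul_pos_of_neg_of_neg, h₁, h₃]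

theorem abs_map_equivTuple_le (τ : R →+* ℝ) (h₁ : τ c₁ < 0) (h₃ : τ c₃ < 0)
    (x : ℍ[R,c₁,0,c₃]) (i : Fin 4) :
    |τ (equivTuple c₁ 0 c₃ x i)| ≤ √(τ (nrd x) / τ (nrdCoeff c₁ c₃ i)) := by
  have hpos := map_nrdCoeff_pos τ h₁ h₃
  refine Real.abs_le_sqrt ((le_div_iff₀ (hpos i)).mpr ?_)
  calc τ (equivTuple c₁ 0 c₃ x i) ^ 2 * τ (nrdCoeff c₁ c₃ i)
      = τ (nrdCoeff c₁ c₃ i) * τ (equivTuple c₁ 0 c₃ x i) ^ 2 := mul_comm _ _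
    _ ≤ ∑ j, τ (nrdCoeff c₁ c₃ j) * τ (equivTuple c₁ 0 c₃ x j) ^ 2 :=
      Finset.single_le_sum (fun j _ => mul_nonneg (hpos j).le (sq_nonneg (τ (equivTuple c₁ 0 c₃ x j))))
        (Finset.mem_univ i)
    _ = τ (nrd x) := by simp only [nrd_eq_sum, map_sum, map_mul, map_pow]

end CommRing

section NumberField

variable {F : Type*} [Field F] [NumberField F] {a b : F}

theorem finite_setOf_mem_forall_norm_nrd_le [IsTotallyReal F] (ha : ∀ τ : F →+* ℝ, τ a < 0)
    (hb : ∀ τ : F →+* ℝ, τ b < 0) {M : Submodule (𝓞 F) ℍ[F,a,b]} (hM : M.FG) (C : ℝ) :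
    {x | x ∈ M ∧ ∀ φ : F →+* ℂ, ‖φ (nrd x)‖ ≤ C}.Finite := by
  let coord (i : Fin 4) : ℍ[F,a,b] →ₗ[𝓞 F] F :=
    (LinearMap.proj i ∘ₗ (linearEquivTuple a 0 b).toLinearMap).restrictScalars (𝓞 F)
  let τ (φ : F →+* ℂ) : F →+* ℝ := (IsTotallyReal.complexEmbedding_isReal φ).embedding
  have hcoord (i : Fin 4) := finite_setOf_mem_forall_norm_le (hM.map (coord i))
    fun φ => √(C / τ φ (nrdCoeff a b i))
  refine ((Set.Finite.pi' hcoord).preimage (equivTuple a 0 b).injective.injOn).subset ?_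
  rintro x ⟨hx, hC⟩ i
  refine ⟨Submodule.mem_map_of_mem hx, fun φ => ?_⟩
  have hφ := IsTotallyReal.complexEmbedding_isReal φ
  have hnrd := hC φ
  rw [hφ.norm_apply] at hnrd ⊢
  exact (abs_map_equivTuple_le (τ φ) (ha _) (hb _) x i).trans <|
    Real.sqrt_le_sqrt <| div_le_div_of_nonneg_right ((le_abs_self _).trans hnrd)
      (map_nrdCoeff_pos (τ φ) (ha _) (hb _) i).le

theorem exists_unit_eq_nrd (R : Subring ℍ[F,a,b])
    (hR : (Submodule.span (𝓞 F) (R : Set ℍ[F,a,b])).FG) (u : Rˣ) :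
    ∃ ε : (𝓞 F)ˣ, (ε : F) = nrd ((u : R) : ℍ[F,a,b]) := by
  have hint (v : Rˣ) : IsIntegral ℤ (nrd ((v : R) : ℍ[F,a,b])) :=
    isIntegral_nrd (R.isIntegral_of_mem_of_fg_span hR (v : R).2)
  refine ⟨Units.mkOfMulEqOne ⟨_, hint u⟩ ⟨_, hint u⁻¹⟩ (RingOfIntegers.coe_injective ?_), rfl⟩
  change nrd ((u : R) : ℍ[F,a,b]) * nrd (((u⁻¹ : Rˣ) : R) : ℍ[F,a,b]) = 1
  rw [← map_mul, ← Subring.coe_mul, ← Units.val_mul, mul_inv_cancel]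
  simp

theorem exists_nrd_mul_coe_mem (R : Subring ℍ[F,a,b])
    (hR : (Submodule.span (𝓞 F) (R : Set ℍ[F,a,b])).FG) {T : Set (𝓞 F)ˣ}
    (hT : ∀ ε, ∃ ν ∈ T, ∃ η, ε = ν * η ^ 2) (u : Rˣ) :
    ∃ η : (𝓞 F)ˣ, ∃ ν ∈ T,
      nrd (((u : R) : ℍ[F,a,b]) * (((η : 𝓞 F) : F) : ℍ[F,a,b])) = ((ν : 𝓞 F) : F) := by
  obtain ⟨ε, hε⟩ := exists_unit_eq_nrd R hR u
  obtain ⟨ν, hν, η, rfl⟩ := hT ε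
  refine ⟨η⁻¹, ν, hν, ?_⟩
  rw [map_mul, nrd_coe, ← hε]
  simp

end NumberField

end QuaternionAlgebra

open QuaternionAlgebra in
theorem statement_6_general
    (F : Type*) [Field F] [NumberField F]
    (htr : ∀ φ : F →+* ℂ, ∀ x : F, (φ x).im = 0)
    (a b : F)
    (ha : ∀ τ : F →+* ℝ, τ a < 0) (hb : ∀ τ : F →+* ℝ, τ b < 0)
    (R : Subring ℍ[F, a, b])
    -- `R` contains `𝒪` (embedded as scalars):
    (hO : ∀ c : 𝓞 F, algebraMap F ℍ[F, a, b] (algebraMap (𝓞 F) F c) ∈ R)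
    -- `R` is finitely generated as an `𝒪`-module:
    (hfg : (Submodule.span (𝓞 F) (R : Set ℍ[F, a, b])).FG) :
    Finite (Rˣ ⧸ (Units.map (RingHom.codRestrict
      ((algebraMap F ℍ[F, a, b]).comp (algebraMap (𝓞 F) F)) R hO).toMonoidHom).range) := by
  have := isTotallyReal_of_forall_im_eq_zero htr
  have : Group.FG (𝓞 F)ˣ := Group.fg_iff_monoid_fg.mpr inferInstance
  obtain ⟨T, hTfin, hT⟩ := exists_finite_mul_sq (𝓞 F)ˣ
  obtain ⟨C, hC⟩ := (hTfin.biUnion fun ν _ =>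
    Set.finite_range fun φ : F →+* ℂ => ‖φ ((ν : 𝓞 F) : F)‖).bddAbove
  have hfin : {u : Rˣ | ∀ φ : F →+* ℂ, ‖φ (nrd ((u : R) : ℍ[F,a,b]))‖ ≤ C}.Finite :=
    ((finite_setOf_mem_forall_norm_nrd_le ha hb hfg C).preimage
      (Subtype.val_injective.comp Units.val_injective).injOn).subset
      fun u hu => ⟨Submodule.subset_span (u : R).2, hu⟩
  refine QuotientGroup.finite_of_forall_exists_mul_mem _ hfin fun u => ?_
  obtain ⟨η, ν, hν, hnrd⟩ := exists_nrd_mul_coe_mem R hfg hT u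
  refine ⟨_, ⟨η, rfl⟩, fun φ => ?_⟩
  change ‖φ (nrd (((u : R) : ℍ[F,a,b]) * (((η : 𝓞 F) : F) : ℍ[F,a,b])))‖ ≤ C
  rw [hnrd]
  exact hC (Set.mem_biUnion hν ⟨φ, rfl⟩)

/-- for an `𝒪`-order `R` in a totally definite quaternion algebra
`B = ℍ[F,a,b]` over a totally real number field `F`, the quotient `R^×/𝒪^×` of the
unit group of `R` by the (central) unit group of `𝒪` is finite. -/
theorem statement_6
    (F : Type*) [Field F] [NumberField F]
    (htr : ∀ φ : F →+* ℂ, ∀ x : F, (φ x).im = 0)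
    (a b : F) (ha0 : a ≠ 0) (hb0 : b ≠ 0)
    (ha : ∀ τ : F →+* ℝ, τ a < 0) (hb : ∀ τ : F →+* ℝ, τ b < 0)
    (R : Subring ℍ[F, a, b])
    -- `R` contains `𝒪` (embedded as scalars):
    (hO : ∀ c : 𝓞 F, algebraMap F ℍ[F, a, b] (algebraMap (𝓞 F) F c) ∈ R)
    -- `R` is finitely generated as an `𝒪`-module:
    (hfg : (Submodule.span (𝓞 F) (R : Set ℍ[F, a, b])).FG)
    -- `R` spans `B` over `F`:
    (hspan : Submodule.span F (R : Set ℍ[F, a, b]) = ⊤) :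
    Finite (Rˣ ⧸ (Units.map (RingHom.codRestrict
      ((algebraMap F ℍ[F, a, b]).comp (algebraMap (𝓞 F) F)) R hO).toMonoidHom).range) :=
  statement_6_general F htr a b ha hb R hO hfg
end

section
/- Let x ∈ B̂^× and v ∈ V, and assume that the set Γ_{x,y} is finite for every y ∈ B̂^×. Then: (i) the function φ_{x,v} : B̂^× → V, φ_{x,v}(y) = Σ_{γ ∈ Γ_{x,y}} v·γ, is a quaternionic modular form of weight ρ and level R, i.e. φ_{x,v}(u y γ) = φ_{x,v}(y)·γ for all u ∈ R̂^×, γ ∈ B^×, y ∈ B̂^×; (ii) for every u ∈ R̂^× and γ ∈ B^×, each set Γ_{uxγ, y} is finite and φ_{uxγ, v} = φ_{x, v·γ⁻¹}. -/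
open NumberField Quaternion IsDedekindDomain

noncomputable section

/-- The finite adele ring of a number field. -/
abbrev Adeles (F : Type*) [Field F] [NumberField F] : Type _ :=
  FiniteAdeleRing (𝓞 F) F

/-- The adelization `B ⊗_F 𝔸`, modelled as a quaternion algebra over the adeles. -/
abbrev Bhat (F : Type*) [Field F] [NumberField F] (a b : F) : Type _ :=
  ℍ[Adeles F, algebraMap F (Adeles F) a, algebraMap F (Adeles F) b]

/-- The canonical quaternionic basis of `Bhat`. -/
def quatBasis (F : Type*) [Field F] [NumberField F] (a b : F) :
    QuaternionAlgebra.Basis (Bhat F a b) a 0 b where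
  i := ⟨0, 1, 0, 0⟩
  j := ⟨0, 0, 1, 0⟩
  k := ⟨0, 0, 0, 1⟩
  i_mul_i := by
    ext <;> simp [QuaternionAlgebra.ext_iff, Algebra.smul_def] <;> rfl
  j_mul_j := by
    ext <;> simp [QuaternionAlgebra.ext_iff, Algebra.smul_def] <;> rfl
  i_mul_j := by
    ext <;> simp
  j_mul_i := by
    ext <;> simp

/-- The canonical embedding `B → B̂`. -/
def iotaB (F : Type*) [Field F] [NumberField F] (a b : F) :
    ℍ[F, a, b] →ₐ[F] Bhat F a b :=
  (quatBasis F a b).liftHom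

/-- The integral adeles `Ô` inside the finite adeles. -/
def intAdeles (F : Type*) [Field F] [NumberField F] : Set (Adeles F) :=
  {x | ∀ v : HeightOneSpectrum (𝓞 F), x v ∈ v.adicCompletionIntegers F}

variable {F : Type*} [Field F] [NumberField F] {a b : F}

/-- `R̂`, the image of `R ⊗_𝒪 Ô` in `B̂`. -/
def Rhat (R : Subring ℍ[F, a, b]) : Subring (Bhat F a b) :=
  Subring.closure
    {z | ∃ r ∈ R, ∃ o ∈ intAdeles F,
      z = algebraMap (Adeles F) (Bhat F a b) o * iotaB F a b r}

/-- `R̂ˣ` as a subgroup of `B̂ˣ`. -/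
def Uhat (R : Subring ℍ[F, a, b]) : Subgroup (Bhat F a b)ˣ :=
  (Units.map (Rhat R).subtype.toMonoidHom).range

/-- The embedding `B^× → B̂^×`. -/
def gmap (F : Type*) [Field F] [NumberField F] (a b : F) :
    ℍ[F, a, b]ˣ →* (Bhat F a b)ˣ :=
  Units.map (iotaB F a b).toRingHom.toMonoidHom

/-- `𝒪^×` as a subgroup of `B^×`. -/
def OunitsB (F : Type*) [Field F] [NumberField F] (a b : F) : Subgroup ℍ[F, a, b]ˣ :=
  (Units.map ((algebraMap F ℍ[F, a, b]).comp (algebraMap (𝓞 F) F)).toMonoidHom).range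

/-- The set `B^× ∩ x⁻¹ R̂^× y` (inside `B^×`). -/
def GammaSet (R : Subring ℍ[F, a, b]) (x y : (Bhat F a b)ˣ) : Set ℍ[F, a, b]ˣ :=
  {γ | ∃ u ∈ Uhat R, gmap F a b γ = x⁻¹ * u * y}

/-- `T` is a (finite) set of representatives for `Γ_{x,y} = (B^× ∩ x⁻¹ R̂^× y)/𝒪^×`. -/
def IsGammaReps (R : Subring ℍ[F, a, b]) (x y : (Bhat F a b)ˣ)
    (T : Finset ℍ[F, a, b]ˣ) : Prop :=
  ↑T ⊆ GammaSet R x y ∧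
    ∀ γ ∈ GammaSet R x y, ∃! γ' : ℍ[F, a, b]ˣ,
      γ' ∈ T ∧ ∃ ε ∈ OunitsB F a b, γ = γ' * ε

variable {V : Type*} [AddCommGroup V] [Module ℂ V]

/-- `(V, act)` is a unitary right representation of `B^×/F^×`. -/
def IsWeightRep (F : Type*) [Field F] [NumberField F] (a b : F)
    (act : V → ℍ[F, a, b]ˣ → V) : Prop :=
  (∀ v, act v 1 = v) ∧
  (∀ v γ₁ γ₂, act (act v γ₁) γ₂ = act v (γ₁ * γ₂)) ∧
  (∀ γ, IsLinearMap ℂ (fun v => act v γ)) ∧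
  (∀ (v : V) (c : Fˣ), act v (Units.map (algebraMap F ℍ[F, a, b]).toMonoidHom c) = v)

/-- `φ` is the quaternionic modular form `φ_{x,v}`. -/
def IsPhi (R : Subring ℍ[F, a, b]) (act : V → ℍ[F, a, b]ˣ → V)
    (x : (Bhat F a b)ˣ) (v : V) (φ : (Bhat F a b)ˣ → V) : Prop :=
  ∀ y : (Bhat F a b)ˣ, ∃ T : Finset ℍ[F, a, b]ˣ,
    IsGammaReps R x y T ∧ φ y = ∑ γ ∈ T, act v γ

/-- `φ` is a quaternionic modular form of weight `act` and level `R`. -/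
def IsQMF (R : Subring ℍ[F, a, b]) (act : V → ℍ[F, a, b]ˣ → V)
    (φ : (Bhat F a b)ˣ → V) : Prop :=
  ∀ u ∈ Uhat R, ∀ (γ : ℍ[F, a, b]ˣ) (y : (Bhat F a b)ˣ),
    φ (u * y * gmap F a b γ) = act (φ y) γ

/-- `z` normalizes `R̂`. -/
def Normalizes (R : Subring ℍ[F, a, b]) (z : (Bhat F a b)ˣ) : Prop :=
  (fun w => ((z⁻¹ : (Bhat F a b)ˣ) : Bhat F a b) * w * (z : Bhat F a b)) ''
      ((Rhat R : Set (Bhat F a b))) = (Rhat R : Set (Bhat F a b))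

/-- The order `R_x = B ∩ x⁻¹ R̂ x`. -/
def Rx (R : Subring ℍ[F, a, b]) (x : (Bhat F a b)ˣ) : Set ℍ[F, a, b] :=
  {w | ∃ r ∈ Rhat R, iotaB F a b w = ((x⁻¹ : (Bhat F a b)ˣ) : Bhat F a b) * r * (x : Bhat F a b)}

/-- The unit group `R_x^×` inside `B^×`. -/
def RxUnits (R : Subring ℍ[F, a, b]) (x : (Bhat F a b)ˣ) : Set ℍ[F, a, b]ˣ :=
  {γ | ((γ : ℍ[F, a, b]) ∈ Rx R x) ∧ (((γ⁻¹ : ℍ[F, a, b]ˣ) : ℍ[F, a, b]) ∈ Rx R x)}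

/-- `T` is a set of representatives for `Γ_x = R_x^×/𝒪^×`; in particular `t_x = T.card`. -/
def IsStabReps (R : Subring ℍ[F, a, b]) (x : (Bhat F a b)ˣ)
    (T : Finset ℍ[F, a, b]ˣ) : Prop :=
  ↑T ⊆ RxUnits R x ∧
    ∀ γ ∈ RxUnits R x, ∃! γ' : ℍ[F, a, b]ˣ,
      γ' ∈ T ∧ ∃ ε ∈ OunitsB F a b, γ = γ' * ε

/-- `xs` is a set of representatives for `Cl(R) = R̂^× \ B̂^× / B^×`. -/
def IsClassReps (R : Subring ℍ[F, a, b]) (xs : Finset (Bhat F a b)ˣ) : Prop :=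
  ∀ y : (Bhat F a b)ˣ, ∃! x : (Bhat F a b)ˣ,
    x ∈ xs ∧ ∃ u ∈ Uhat R, ∃ γ : ℍ[F, a, b]ˣ, y = u * x * gmap F a b γ

/-- The reduced norm of a quaternion over a commutative ring. -/
def nrd {R : Type*} [CommRing R] {c₁ c₂ : R} (x : ℍ[R, c₁, c₂]) : R :=
  x.re ^ 2 - c₁ * x.imI ^ 2 - c₂ * x.imJ ^ 2 + c₁ * c₂ * x.imK ^ 2

/-- The set `H_𝔪 = {h ∈ B̂^× ∩ R̂ : Ô·n(h) ∩ 𝒪 = 𝔪}`. -/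
def Hset (R : Subring ℍ[F, a, b]) (𝔪 : Ideal (𝓞 F)) : Set (Bhat F a b)ˣ :=
  {h | ((h : Bhat F a b) ∈ Rhat R) ∧
    {c : 𝓞 F | ∃ o ∈ intAdeles F,
        algebraMap F (Adeles F) (algebraMap (𝓞 F) F c) = o * nrd (h : Bhat F a b)}
      = (𝔪 : Set (𝓞 F))}

/-- `T` is a set of representatives for the left cosets `R̂^× \ H_𝔪`. -/
def IsHeckeLeftReps (R : Subring ℍ[F, a, b]) (𝔪 : Ideal (𝓞 F))
    (T : Finset (Bhat F a b)ˣ) : Prop :=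
  ↑T ⊆ Hset R 𝔪 ∧
    ∀ h ∈ Hset R 𝔪, ∃! h' : (Bhat F a b)ˣ, h' ∈ T ∧ ∃ u ∈ Uhat R, h = u * h'

/-- `T` is a set of representatives for the right cosets `H_𝔪 / R̂^×`. -/
def IsHeckeRightReps (R : Subring ℍ[F, a, b]) (𝔪 : Ideal (𝓞 F))
    (T : Finset (Bhat F a b)ˣ) : Prop :=
  ↑T ⊆ Hset R 𝔪 ∧
    ∀ h ∈ Hset R 𝔪, ∃! h' : (Bhat F a b)ˣ, h' ∈ T ∧ ∃ u ∈ Uhat R, h = h' * u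

end

/-!
Both parts come down to the bijections `γ ↦ γ γ₀` from `Γ_{x,y}` onto `Γ_{x,u y γ₀}` and
`γ ↦ γ₀⁻¹ γ` from `Γ_{x,y}` onto `Γ_{u x γ₀, y}`. They commute with the action of the central
subgroup `𝒪^×`, so they carry sets of representatives to sets of representatives; and since
`𝒪^×` acts trivially on `V`, the sum `Σ_{γ ∈ T} v·γ` does not depend on the choice of
representatives `T`.
-/

section Reps

variable {G : Type*} [Group G]

-- `IsGammaReps R x y T` unfolds to `IsRepsOf (OunitsB F a b) (GammaSet R x y) T`.
def IsRepsOf (Z : Subgroup G) (S : Set G) (T : Finset G) : Prop :=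
  ↑T ⊆ S ∧ ∀ γ ∈ S, ∃! γ' : G, γ' ∈ T ∧ ∃ ε ∈ Z, γ = γ' * ε

namespace IsRepsOf

variable {Z : Subgroup G} {S S' : Set G} {T T₁ T₂ : Finset G}

theorem exists_rep (hT : IsRepsOf Z S T) {γ : G} (hγ : γ ∈ S) :
    ∃ γ' ∈ T, ∃ ε ∈ Z, γ = γ' * ε := by
  obtain ⟨γ', hγ', -⟩ := hT.2 γ hγ
  exact ⟨γ', hγ'⟩

theorem eq_of_eq_mul (hT : IsRepsOf Z S T) {γ₁ γ₂ : G} (h₁ : γ₁ ∈ T) (h₂ : γ₂ ∈ T)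
    {ε : G} (hε : ε ∈ Z) (h : γ₁ = γ₂ * ε) : γ₁ = γ₂ :=
  (hT.2 γ₁ (hT.1 h₁)).unique ⟨h₁, 1, Z.one_mem, (mul_one γ₁).symm⟩ ⟨h₂, ε, hε, h⟩

theorem sum_eq {M : Type*} [AddCommMonoid M] {f : G → M}
    (hf : ∀ g, ∀ ε ∈ Z, f (g * ε) = f g) (h₁ : IsRepsOf Z S T₁) (h₂ : IsRepsOf Z S T₂) :
    ∑ g ∈ T₁, f g = ∑ g ∈ T₂, f g := by
  choose! i hiT ε hεZ hi using fun γ (hγ : γ ∈ T₁) => h₂.exists_rep (h₁.1 hγ)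
  choose! j hjT δ hδZ hj using fun γ (hγ : γ ∈ T₂) => h₁.exists_rep (h₂.1 hγ)
  refine Finset.sum_nbij' i j hiT hjT (fun γ hγ => ?_) (fun γ hγ => ?_) (fun γ hγ => ?_)
  · refine (h₁.eq_of_eq_mul hγ (hjT _ (hiT γ hγ)) (Z.mul_mem (hδZ _ (hiT γ hγ)) (hεZ γ hγ)) ?_).symm
    rw [← mul_assoc, ← hj _ (hiT γ hγ), ← hi γ hγ]
  · refine (h₂.eq_of_eq_mul hγ (hiT _ (hjT γ hγ)) (Z.mul_mem (hεZ _ (hjT γ hγ)) (hδZ γ hγ)) ?_).symm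
    rw [← mul_assoc, ← hi _ (hjT γ hγ), ← hj γ hγ]
  · exact (congrArg f (hi γ hγ)).trans (hf _ _ (hεZ γ hγ))

theorem map (hT : IsRepsOf Z S T) (e : G ≃ G) (hS : ∀ γ, e γ ∈ S' ↔ γ ∈ S)
    (he : ∀ g, ∀ ε ∈ Z, e (g * ε) = e g * ε) : IsRepsOf Z S' (T.map e.toEmbedding) := by
  refine ⟨?_, fun δ hδ => ?_⟩
  · intro δ hδ
    obtain ⟨γ, hγ, rfl⟩ := Finset.mem_map.1 hδ
    exact (hS γ).2 (hT.1 hγ)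
  have hδ' : e.symm δ ∈ S := (hS _).1 (by rwa [e.apply_symm_apply])
  obtain ⟨γ, ⟨hγ, ε, hε, hγε⟩, huniq⟩ := hT.2 _ hδ'
  refine ⟨e γ, ⟨Finset.mem_map_of_mem _ hγ, ε, hε, ?_⟩, ?_⟩
  · rw [← he γ ε hε, ← hγε, e.apply_symm_apply]
  · rintro _ ⟨hγ', ε', hε', hδε'⟩
    obtain ⟨γ', hγ'T, rfl⟩ := Finset.mem_map.1 hγ'
    have : e.symm δ = γ' * ε' := by
      rw [hδε', Equiv.coe_toEmbedding, ← he γ' ε' hε', e.symm_apply_apply]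
    exact congrArg e (huniq γ' ⟨hγ'T, ε', hε', this⟩)

theorem map_mul_left (hT : IsRepsOf Z S T) (γ₀ : G) (hS : ∀ γ, γ₀ * γ ∈ S' ↔ γ ∈ S) :
    IsRepsOf Z S' (T.map (Equiv.mulLeft γ₀).toEmbedding) :=
  hT.map _ hS fun g ε _ => (mul_assoc γ₀ g ε).symm

theorem map_mul_right (hT : IsRepsOf Z S T) (hZ : Z ≤ Subgroup.center G) (γ₀ : G)
    (hS : ∀ γ, γ * γ₀ ∈ S' ↔ γ ∈ S) :
    IsRepsOf Z S' (T.map (Equiv.mulRight γ₀).toEmbedding) :=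
  hT.map _ hS fun g ε hε => by
    simp only [Equiv.coe_mulRight, mul_assoc, Subgroup.mem_center_iff.1 (hZ hε) γ₀]

end IsRepsOf

end Reps

section Quaternionic

variable {F : Type*} [Field F] [NumberField F] {a b : F}

theorem ounitsB_le_center : OunitsB F a b ≤ Subgroup.center ℍ[F, a, b]ˣ := by
  rintro _ ⟨c, rfl⟩
  refine Subgroup.mem_center_iff.2 fun g => Units.ext ?_
  exact (Algebra.commutes _ _).symm

section GammaSet

variable {R : Subring ℍ[F, a, b]} {x y u : (Bhat F a b)ˣ}

theorem mul_mem_gammaSet_iff (hu : u ∈ Uhat R) (γ₀ γ : ℍ[F, a, b]ˣ) :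
    γ * γ₀ ∈ GammaSet R x (u * y * gmap F a b γ₀) ↔ γ ∈ GammaSet R x y := by
  constructor
  · rintro ⟨w, hw, h⟩
    refine ⟨w * u, (Uhat R).mul_mem hw hu, mul_right_cancel (b := gmap F a b γ₀) ?_⟩
    rw [← map_mul, h]
    group
  · rintro ⟨w, hw, h⟩
    refine ⟨w * u⁻¹, (Uhat R).mul_mem hw ((Uhat R).inv_mem hu), ?_⟩
    rw [map_mul, h]
    group

theorem inv_mul_mem_gammaSet_iff (hu : u ∈ Uhat R) (γ₀ γ : ℍ[F, a, b]ˣ) :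
    γ₀⁻¹ * γ ∈ GammaSet R (u * x * gmap F a b γ₀) y ↔ γ ∈ GammaSet R x y := by
  constructor
  · rintro ⟨w, hw, h⟩
    refine ⟨u⁻¹ * w, (Uhat R).mul_mem ((Uhat R).inv_mem hu) hw,
      mul_left_cancel (a := gmap F a b γ₀⁻¹) ?_⟩
    rw [← map_mul, h, map_inv]
    group
  · rintro ⟨w, hw, h⟩
    refine ⟨u * w, (Uhat R).mul_mem hu hw, ?_⟩
    rw [map_mul, map_inv, h]
    group

theorem IsGammaReps.map_mul_right {T : Finset ℍ[F, a, b]ˣ} (hT : IsGammaReps R x y T)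
    (hu : u ∈ Uhat R) (γ₀ : ℍ[F, a, b]ˣ) :
    IsGammaReps R x (u * y * gmap F a b γ₀) (T.map (Equiv.mulRight γ₀).toEmbedding) :=
  IsRepsOf.map_mul_right hT ounitsB_le_center γ₀ (mul_mem_gammaSet_iff hu γ₀)

theorem IsGammaReps.map_inv_mul {T : Finset ℍ[F, a, b]ˣ} (hT : IsGammaReps R x y T)
    (hu : u ∈ Uhat R) (γ₀ : ℍ[F, a, b]ˣ) :
    IsGammaReps R (u * x * gmap F a b γ₀) y (T.map (Equiv.mulLeft γ₀⁻¹).toEmbedding) :=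
  IsRepsOf.map_mul_left hT γ₀⁻¹ (inv_mul_mem_gammaSet_iff hu γ₀)

end GammaSet

section Forms

variable {V : Type*} [AddCommGroup V] [Module ℂ V] {act : V → ℍ[F, a, b]ˣ → V}

namespace IsWeightRep

theorem act_act (hact : IsWeightRep F a b act) (v : V) (γ₁ γ₂ : ℍ[F, a, b]ˣ) :
    act (act v γ₁) γ₂ = act v (γ₁ * γ₂) :=
  hact.2.1 v γ₁ γ₂

theorem act_sum (hact : IsWeightRep F a b act) {ι : Type*} (T : Finset ι) (f : ι → V)
    (γ : ℍ[F, a, b]ˣ) : act (∑ i ∈ T, f i) γ = ∑ i ∈ T, act (f i) γ :=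
  map_sum (IsLinearMap.mk' _ (hact.2.2.1 γ)) f T

theorem act_of_mem_ounitsB (hact : IsWeightRep F a b act) (v : V) {ε : ℍ[F, a, b]ˣ}
    (hε : ε ∈ OunitsB F a b) : act v ε = v := by
  obtain ⟨c, rfl⟩ := hε
  exact hact.2.2.2 v (Units.map (algebraMap (𝓞 F) F).toMonoidHom c)

end IsWeightRep

variable {R : Subring ℍ[F, a, b]} {x : (Bhat F a b)ˣ} {v : V} {φ ψ : (Bhat F a b)ˣ → V}

namespace IsPhi

theorem apply_eq_sum (hact : IsWeightRep F a b act) (hφ : IsPhi R act x v φ)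
    {y : (Bhat F a b)ˣ} {T : Finset ℍ[F, a, b]ˣ} (hT : IsGammaReps R x y T) :
    φ y = ∑ γ ∈ T, act v γ := by
  obtain ⟨T', hT', hφy⟩ := hφ y
  rw [hφy]
  refine IsRepsOf.sum_eq (fun g ε hε => ?_) hT' hT
  rw [← hact.act_act, hact.act_of_mem_ounitsB _ hε]

theorem unique (hact : IsWeightRep F a b act) (hφ : IsPhi R act x v φ)
    (hψ : IsPhi R act x v ψ) : φ = ψ := by
  funext y
  obtain ⟨T, hT, hψy⟩ := hψ y
  rw [hφ.apply_eq_sum hact hT, hψy]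

theorem isQMF (hact : IsWeightRep F a b act) (hφ : IsPhi R act x v φ) : IsQMF R act φ := by
  intro u hu γ₀ y
  obtain ⟨T, hT, hφy⟩ := hφ y
  rw [hφ.apply_eq_sum hact (hT.map_mul_right hu γ₀), hφy, hact.act_sum, Finset.sum_map]
  simp only [Equiv.coe_toEmbedding, Equiv.coe_mulRight, hact.act_act]

theorem of_act_inv (hact : IsWeightRep F a b act) {γ₀ : ℍ[F, a, b]ˣ}
    (hφ : IsPhi R act x (act v γ₀⁻¹) φ) {u : (Bhat F a b)ˣ} (hu : u ∈ Uhat R) :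
    IsPhi R act (u * x * gmap F a b γ₀) v φ := by
  intro y
  obtain ⟨T, hT, hφy⟩ := hφ y
  refine ⟨_, hT.map_inv_mul hu γ₀, ?_⟩
  rw [hφy, Finset.sum_map]
  simp only [Equiv.coe_toEmbedding, Equiv.coe_mulLeft, hact.act_act]

end IsPhi

end Forms

end Quaternionic

theorem statement_7_general
    {F : Type*} [Field F] [NumberField F]
    {a b : F}
    (R : Subring ℍ[F, a, b])
    {V : Type*} [AddCommGroup V] [Module ℂ V]
    (act : V → ℍ[F, a, b]ˣ → V) (hact : IsWeightRep F a b act)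

    (x : (Bhat F a b)ˣ) (v : V)
    (hfin : ∀ y : (Bhat F a b)ˣ, ∃ T : Finset ℍ[F, a, b]ˣ, IsGammaReps R x y T)
    (φ : (Bhat F a b)ˣ → V) (hφ : IsPhi R act x v φ) :
    IsQMF R act φ ∧
    ∀ u ∈ Uhat R, ∀ γ : ℍ[F, a, b]ˣ,
      (∀ y : (Bhat F a b)ˣ, ∃ T : Finset ℍ[F, a, b]ˣ,
        IsGammaReps R (u * x * gmap F a b γ) y T) ∧
      (∀ ψ : (Bhat F a b)ˣ → V, IsPhi R act (u * x * gmap F a b γ) v ψ →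
        ∀ ψ' : (Bhat F a b)ˣ → V, IsPhi R act x (act v γ⁻¹) ψ' → ψ = ψ') := by
  refine ⟨hφ.isQMF hact, fun u hu γ => ⟨fun y => ?_, fun ψ hψ ψ' hψ' => ?_⟩⟩
  · obtain ⟨T, hT⟩ := hfin y
    exact ⟨_, hT.map_inv_mul hu γ⟩
  · exact hψ.unique hact (hψ'.of_act_inv hact hu)

/-- `φ_{x,v}` is a quaternionic modular form of weight `ρ` and level `R`,
and `φ_{uxγ,v} = φ_{x,v·γ⁻¹}` for `u ∈ R̂^×`, `γ ∈ B^×`. -/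
theorem statement_7
    {F : Type*} [Field F] [NumberField F]
    (htr : ∀ φ : F →+* ℂ, ∀ x : F, (φ x).im = 0)
    {a b : F} (ha0 : a ≠ 0) (hb0 : b ≠ 0)
    (ha : ∀ τ : F →+* ℝ, τ a < 0) (hb : ∀ τ : F →+* ℝ, τ b < 0)
    (R : Subring ℍ[F, a, b])
    (hRO : ∀ c : NumberField.RingOfIntegers F,
      algebraMap F ℍ[F, a, b] (algebraMap (NumberField.RingOfIntegers F) F c) ∈ R)
    (hRfg : (Submodule.span (NumberField.RingOfIntegers F) (R : Set ℍ[F, a, b])).FG)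
    (hRspan : Submodule.span F (R : Set ℍ[F, a, b]) = ⊤)
    {V : Type*} [AddCommGroup V] [Module ℂ V]
    (act : V → ℍ[F, a, b]ˣ → V) (hact : IsWeightRep F a b act)

    (x : (Bhat F a b)ˣ) (v : V)
    (hfin : ∀ y : (Bhat F a b)ˣ, ∃ T : Finset ℍ[F, a, b]ˣ, IsGammaReps R x y T)
    (φ : (Bhat F a b)ˣ → V) (hφ : IsPhi R act x v φ) :
    IsQMF R act φ ∧
    ∀ u ∈ Uhat R, ∀ γ : ℍ[F, a, b]ˣ,
      (∀ y : (Bhat F a b)ˣ, ∃ T : Finset ℍ[F, a, b]ˣ,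
        IsGammaReps R (u * x * gmap F a b γ) y T) ∧
      (∀ ψ : (Bhat F a b)ˣ → V, IsPhi R act (u * x * gmap F a b γ) v ψ →
        ∀ ψ' : (Bhat F a b)ˣ → V, IsPhi R act x (act v γ⁻¹) ψ' → ψ = ψ') :=
  statement_7_general R act hact x v hfin φ hφ
end

section
/- Let x ∈ B̂^× and v ∈ V, let z ∈ N(R̂) = {z ∈ B̂^× : z⁻¹ R̂ z = R̂}, and assume that the sets Γ_{x,y} and Γ_{z⁻¹x, y} are finite for every y ∈ B̂^×. Then φ_{x,v}·z = φ_{z⁻¹x, v}, where (φ·z)(y) = φ(zy). -/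
open NumberField Quaternion IsDedekindDomain

/-!
Conjugation by `z` preserves `R̂^×`, so `u ↦ z⁻¹ u z` identifies `B^× ∩ x⁻¹ R̂^× (z y)` with
`B^× ∩ (z⁻¹ x)⁻¹ R̂^× y`. The two sums defining `φ_{x,v}(z y)` and `φ_{z⁻¹ x, v}(y)` therefore run
over representatives of the same set modulo `𝒪^×`, and `𝒪^×` acts trivially on `V`.
-/

section Transversal

variable {G M : Type*} [Group G] [AddCommMonoid M] {H : Subgroup G} {S : Set G}

def IsRightTransversal (H : Subgroup G) (S : Set G) (T : Finset G) : Prop :=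
  ↑T ⊆ S ∧ ∀ γ ∈ S, ∃! γ' : G, γ' ∈ T ∧ ∃ ε ∈ H, γ = γ' * ε

namespace IsRightTransversal

variable {T T' : Finset G}

theorem injOn_mk (hT : IsRightTransversal H S T) :
    Set.InjOn (QuotientGroup.mk : G → G ⧸ H) T := by
  intro γ₁ h₁ γ₂ h₂ hmk
  have hmem : γ₂⁻¹ * γ₁ ∈ H := QuotientGroup.eq.1 hmk.symm
  exact (hT.2 γ₁ (hT.1 h₁)).unique ⟨h₁, 1, H.one_mem, (mul_one γ₁).symm⟩
    ⟨h₂, γ₂⁻¹ * γ₁, hmem, (mul_inv_cancel_left γ₂ γ₁).symm⟩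

theorem image_mk (hT : IsRightTransversal H S T) :
    (QuotientGroup.mk : G → G ⧸ H) '' T = QuotientGroup.mk '' S := by
  refine (Set.image_mono hT.1).antisymm ?_
  rintro _ ⟨γ, hγ, rfl⟩
  obtain ⟨γ', ⟨hγ'T, ε, hε, rfl⟩, -⟩ := hT.2 γ hγ
  exact ⟨γ', hγ'T, (QuotientGroup.mk_mul_of_mem γ' hε).symm⟩

theorem sum_congr (hT : IsRightTransversal H S T) (hT' : IsRightTransversal H S T')
    {f : G → M} (hf : ∀ γ, ∀ ε ∈ H, f (γ * ε) = f γ) :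
    ∑ γ ∈ T, f γ = ∑ γ ∈ T', f γ := by
  classical
  have hsum : ∀ {U : Finset G}, IsRightTransversal H S U →
      ∑ γ ∈ U, f γ = ∑ q ∈ U.image QuotientGroup.mk, f (q : G ⧸ H).out := by
    intro U hU
    rw [Finset.sum_image hU.injOn_mk]
    refine Finset.sum_congr rfl fun γ _ => ?_
    obtain ⟨ε, hε⟩ := QuotientGroup.mk_out_eq_mul H γ
    rw [hε, hf γ ε ε.2]
  have himage : T.image (QuotientGroup.mk : G → G ⧸ H) = T'.image QuotientGroup.mk := by
    rw [← Finset.coe_inj, Finset.coe_image, Finset.coe_image, hT.image_mk, hT'.image_mk]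
  rw [hsum hT, hsum hT', himage]

end IsRightTransversal

end Transversal

theorem Subring.mem_range_unitsMap_subtype_iff {A : Type*} [Ring A] {S : Subring A} {u : Aˣ} :
    u ∈ (Units.map S.subtype.toMonoidHom).range ↔ (u : A) ∈ S ∧ ((u⁻¹ : Aˣ) : A) ∈ S := by
  constructor
  · rintro ⟨w, rfl⟩
    exact ⟨w.1.2, w⁻¹.1.2⟩
  · rintro ⟨hu, hu'⟩
    refine ⟨⟨⟨u, hu⟩, ⟨_, hu'⟩, Subtype.ext u.mul_inv, Subtype.ext u.inv_mul⟩, Units.ext rfl⟩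

theorem Subring.conj_mem_iff_of_image_conj_eq {A : Type*} [Ring A] {S : Subring A} {z : Aˣ}
    (hz : (fun w => ((z⁻¹ : Aˣ) : A) * w * z) '' S = S) {w : A} :
    ((z⁻¹ : Aˣ) : A) * w * z ∈ S ↔ w ∈ S := by
  have hinj : Function.Injective fun w : A => ((z⁻¹ : Aˣ) : A) * w * z := fun w₁ w₂ h => by
    simpa using congrArg (fun t => (z : A) * t * ((z⁻¹ : Aˣ) : A)) h
  rw [← SetLike.mem_coe, ← hz, hinj.mem_set_image, SetLike.mem_coe]

section

variable {F : Type*} [Field F] [NumberField F] {a b : F} {R : Subring ℍ[F, a, b]}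

theorem Normalizes.conj_mem_Uhat_iff {z : (Bhat F a b)ˣ} (hz : Normalizes R z)
    {u : (Bhat F a b)ˣ} : z⁻¹ * u * z ∈ Uhat R ↔ u ∈ Uhat R := by
  simp only [Uhat, Subring.mem_range_unitsMap_subtype_iff, mul_inv_rev, inv_inv, Units.val_mul,
    mul_assoc]
  simp only [← mul_assoc, Subring.conj_mem_iff_of_image_conj_eq hz]

theorem Normalizes.gammaSet_mul_left {z : (Bhat F a b)ˣ} (hz : Normalizes R z)
    (x y : (Bhat F a b)ˣ) : GammaSet R x (z * y) = GammaSet R (z⁻¹ * x) y := by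
  ext γ
  constructor
  · rintro ⟨u, hu, hγ⟩
    exact ⟨z⁻¹ * u * z, hz.conj_mem_Uhat_iff.2 hu, by rw [hγ]; group⟩
  · rintro ⟨u, hu, hγ⟩
    refine ⟨z * u * z⁻¹, hz.conj_mem_Uhat_iff.1 ?_, by rw [hγ]; group⟩
    simpa only [mul_assoc, inv_mul_cancel_left, inv_mul_cancel, mul_one] using hu

theorem IsWeightRep.act_mul_of_mem_OunitsB {V : Type*} [AddCommGroup V] [Module ℂ V]
    {act : V → ℍ[F, a, b]ˣ → V} (hact : IsWeightRep F a b act) (w : V) (γ : ℍ[F, a, b]ˣ)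
    {ε : ℍ[F, a, b]ˣ} (hε : ε ∈ OunitsB F a b) : act w (γ * ε) = act w γ := by
  obtain ⟨c, rfl⟩ := hε
  rw [← hact.2.1]
  exact hact.2.2.2 _ (Units.map (algebraMap (𝓞 F) F).toMonoidHom c)

end

theorem statement_8_general
    {F : Type*} [Field F] [NumberField F]
    {a b : F}
    (R : Subring ℍ[F, a, b])
    {V : Type*} [AddCommGroup V] [Module ℂ V]
    (act : V → ℍ[F, a, b]ˣ → V) (hact : IsWeightRep F a b act)

    (x : (Bhat F a b)ˣ) (v : V) (z : (Bhat F a b)ˣ) (hz : Normalizes R z)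
    (φ : (Bhat F a b)ˣ → V) (hφ : IsPhi R act x v φ)
    (ψ : (Bhat F a b)ˣ → V) (hψ : IsPhi R act (z⁻¹ * x) v ψ) :
    ∀ y : (Bhat F a b)ˣ, φ (z * y) = ψ y := by
  intro y
  obtain ⟨T, hT, hφy⟩ := hφ (z * y)
  obtain ⟨T', hT', hψy⟩ := hψ y
  have hT₀ : IsRightTransversal (OunitsB F a b) (GammaSet R (z⁻¹ * x) y) T := by
    rw [← hz.gammaSet_mul_left]
    exact hT
  rw [hφy, hψy]
  exact hT₀.sum_congr hT' (hact.act_mul_of_mem_OunitsB v)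

/-- for `z` in the normalizer of `R̂`, `φ_{x,v} · z = φ_{z⁻¹x, v}`. -/
theorem statement_8
    {F : Type*} [Field F] [NumberField F]
    (htr : ∀ φ : F →+* ℂ, ∀ x : F, (φ x).im = 0)
    {a b : F} (ha0 : a ≠ 0) (hb0 : b ≠ 0)
    (ha : ∀ τ : F →+* ℝ, τ a < 0) (hb : ∀ τ : F →+* ℝ, τ b < 0)
    (R : Subring ℍ[F, a, b])
    (hRO : ∀ c : NumberField.RingOfIntegers F,
      algebraMap F ℍ[F, a, b] (algebraMap (NumberField.RingOfIntegers F) F c) ∈ R)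
    (hRfg : (Submodule.span (NumberField.RingOfIntegers F) (R : Set ℍ[F, a, b])).FG)
    (hRspan : Submodule.span F (R : Set ℍ[F, a, b]) = ⊤)
    {V : Type*} [AddCommGroup V] [Module ℂ V]
    (act : V → ℍ[F, a, b]ˣ → V) (hact : IsWeightRep F a b act)

    (x : (Bhat F a b)ˣ) (v : V) (z : (Bhat F a b)ˣ) (hz : Normalizes R z)
    (hfin : ∀ y : (Bhat F a b)ˣ, ∃ T : Finset ℍ[F, a, b]ˣ, IsGammaReps R x y T)
    (hfin' : ∀ y : (Bhat F a b)ˣ, ∃ T : Finset ℍ[F, a, b]ˣ, IsGammaReps R (z⁻¹ * x) y T)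
    (φ : (Bhat F a b)ˣ → V) (hφ : IsPhi R act x v φ)
    (ψ : (Bhat F a b)ˣ → V) (hψ : IsPhi R act (z⁻¹ * x) v ψ) :
    ∀ y : (Bhat F a b)ˣ, φ (z * y) = ψ y :=
  statement_8_general R act hact x v z hz φ hφ ψ hψ
end

section
/- Let z ∈ N(R̂) = {z ∈ B̂^× : z⁻¹ R̂ z = R̂}, and let φ, ψ be quaternionic modular forms of weight ρ and level R. Assume Cl(R) is finite and every Γ_x (x ∈ B̂^×) is finite, so that the height pairing is defined. Then ⟨⟨φ·z, ψ·z⟩⟩ = ⟨⟨φ, ψ⟩⟩, where (φ·z)(x) = φ(zx). -/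
open NumberField Quaternion IsDedekindDomain

/-!
Conjugation by `z` preserves `R̂` and hence `R̂^×`, so `x ↦ z x` permutes the double cosets
`R̂^× \ B̂^× / B^×`. Write `z x = u x' γ` with `x'` the chosen representative of the class of
`z x`. Modularity and unitarity give `⟨φ(z x), ψ(z x)⟩ = ⟨φ(x'), ψ(x')⟩`, while
`R_{z x} = R_x` and `R_{u x' γ} = γ⁻¹ R_{x'} γ` give `t_x = t_{x'}`, because conjugation by `γ`
fixes the central subgroup `𝒪^×`. The two sums are thus rearrangements of each other.
-/

section LeftCosetReps

variable {G : Type*} [Group G]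

def IsLeftCosetReps (O : Subgroup G) (S : Set G) (T : Finset G) : Prop :=
  ↑T ⊆ S ∧ ∀ γ ∈ S, ∃! γ' : G, γ' ∈ T ∧ ∃ ε ∈ O, γ = γ' * ε

namespace IsLeftCosetReps

variable {O : Subgroup G} {S : Set G} {T T' : Finset G}

theorem card_eq_ncard_image_mk (hT : IsLeftCosetReps O S T) :
    T.card = (((↑) : G → G ⧸ O) '' S).ncard := by
  have himage : ((↑) : G → G ⧸ O) '' S = (↑) '' (T : Set G) := by
    refine (Set.image_mono hT.1).antisymm' ?_
    rintro _ ⟨γ, hγ, rfl⟩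
    obtain ⟨γ', ⟨hγ'T, ε, hε, rfl⟩, -⟩ := hT.2 γ hγ
    exact ⟨γ', hγ'T, QuotientGroup.eq.2 (by simpa using hε)⟩
  have hinj : Set.InjOn ((↑) : G → G ⧸ O) ↑T := by
    intro γ₁ h₁ γ₂ h₂ h
    exact (hT.2 γ₂ (hT.1 h₂)).unique ⟨h₁, _, QuotientGroup.eq.1 h, by group⟩
      ⟨h₂, 1, O.one_mem, (mul_one _).symm⟩
  rw [himage, hinj.ncard_image, Set.ncard_coe_finset]

theorem card_eq (hT : IsLeftCosetReps O S T) (hT' : IsLeftCosetReps O S T') :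
    T.card = T'.card :=
  hT.card_eq_ncard_image_mk.trans hT'.card_eq_ncard_image_mk.symm

theorem map (f : G ≃* G) (hf : ∀ ε ∈ O, f ε = ε) (hT : IsLeftCosetReps O (f ⁻¹' S) T) :
    IsLeftCosetReps O S (T.map f.toEquiv.toEmbedding) := by
  have hf_symm : ∀ ε ∈ O, f.symm ε = ε := fun ε hε => f.symm_apply_eq.2 (hf ε hε).symm
  refine ⟨?_, fun δ hδ => ?_⟩
  · intro δ hδ
    obtain ⟨γ, hγ, rfl⟩ := Finset.mem_map.1 hδ
    exact hT.1 hγ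
  · obtain ⟨γ, ⟨hγT, ε, hε, hγ⟩, huniq⟩ := hT.2 (f.symm δ) (by simpa using hδ)
    refine ⟨f γ, ⟨Finset.mem_map_of_mem _ hγT, ε, hε, ?_⟩, ?_⟩
    · rw [← hf ε hε, ← map_mul, ← hγ, MulEquiv.apply_symm_apply]
    · rintro _ ⟨hγ'T, ε', hε', rfl⟩
      obtain ⟨γ', hγ', rfl⟩ := Finset.mem_map.1 hγ'T
      obtain rfl : γ' = γ := huniq γ' ⟨hγ', ε', hε', by simp [map_mul, hf_symm ε' hε']⟩
      rfl

end IsLeftCosetReps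

end LeftCosetReps

theorem Submonoid.mul_mul_inv_mem_iff {M : Type*} [Monoid M] {S : Submonoid M} {u : Mˣ}
    (hu : u ∈ S.units) (y : M) : ↑u * y * ↑u⁻¹ ∈ S ↔ y ∈ S := by
  refine ⟨fun h => ?_, fun h => S.mul_mem (S.mul_mem hu.1 h) hu.2⟩
  have hy : y = ↑u⁻¹ * (↑u * y * ↑u⁻¹) * ↑u := by simp [mul_assoc]
  rw [hy]
  exact S.mul_mem (S.mul_mem hu.2 h) hu.1

theorem Subring.range_unitsMap_subtype {A : Type*} [Ring A] (S : Subring A) :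
    (Units.map S.subtype.toMonoidHom).range = S.toSubmonoid.units := by
  ext u
  rw [Submonoid.mem_units_iff]
  refine ⟨?_, fun hu => ⟨⟨⟨u, hu.1⟩, ⟨↑u⁻¹, hu.2⟩, Subtype.ext u.mul_inv, Subtype.ext u.inv_mul⟩,
    Units.ext rfl⟩⟩
  rintro ⟨w, rfl⟩
  exact ⟨SetLike.coe_mem _, by rw [← map_inv, Units.coe_map]; exact SetLike.coe_mem _⟩

section Quaternionic

variable {F : Type*} [Field F] [NumberField F] {a b : F} {R : Subring ℍ[F, a, b]}

theorem Uhat_eq_units (R : Subring ℍ[F, a, b]) : Uhat R = (Rhat R).toSubmonoid.units :=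
  Subring.range_unitsMap_subtype _

theorem mem_Rx_iff {x : (Bhat F a b)ˣ} {w : ℍ[F, a, b]} :
    w ∈ Rx R x ↔ ↑x * iotaB F a b w * ↑x⁻¹ ∈ Rhat R := by
  constructor
  · rintro ⟨r, hr, hw⟩
    simpa [hw, mul_assoc] using hr
  · exact fun h => ⟨_, h, by simp [mul_assoc]⟩

theorem Rx_mul_mul_gmap {u : (Bhat F a b)ˣ} (hu : u ∈ Uhat R) (x : (Bhat F a b)ˣ)
    (γ : ℍ[F, a, b]ˣ) :
    Rx R (u * x * gmap F a b γ) =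
      (fun w => (γ : ℍ[F, a, b]) * w * ↑γ⁻¹) ⁻¹' Rx R x := by
  rw [Uhat_eq_units] at hu
  ext w
  have hconj : ((u * x * gmap F a b γ : (Bhat F a b)ˣ) : Bhat F a b) * iotaB F a b w *
      ↑(u * x * gmap F a b γ)⁻¹ = ↑u * (↑x * iotaB F a b (↑γ * w * ↑γ⁻¹) * ↑x⁻¹) * ↑u⁻¹ := by
    simp [gmap, mul_assoc]
  rw [Set.mem_preimage, mem_Rx_iff, mem_Rx_iff, hconj]
  exact Submonoid.mul_mul_inv_mem_iff hu _

theorem RxUnits_mul_mul_gmap {u : (Bhat F a b)ˣ} (hu : u ∈ Uhat R) (x : (Bhat F a b)ˣ)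
    (γ : ℍ[F, a, b]ˣ) : RxUnits R (u * x * gmap F a b γ) = MulAut.conj γ ⁻¹' RxUnits R x := by
  ext γ₀
  simp only [RxUnits, Rx_mul_mul_gmap hu]
  simp only [Set.mem_preimage, Set.mem_ofPred_eq, MulAut.conj_apply, Units.val_mul, mul_inv_rev,
    inv_inv, mul_assoc]

theorem conj_eq_of_mem_OunitsB (γ : ℍ[F, a, b]ˣ) {ε : ℍ[F, a, b]ˣ} (hε : ε ∈ OunitsB F a b) :
    MulAut.conj γ ε = ε := by
  obtain ⟨c, rfl⟩ := hε
  rw [MulAut.conj_apply, mul_inv_eq_iff_eq_mul]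
  exact Units.ext (Algebra.commutes _ _).symm

namespace Normalizes

variable {z : (Bhat F a b)ˣ}

theorem inv_mul_mul_mem_iff (hz : Normalizes R z) (y : Bhat F a b) :
    ↑z⁻¹ * y * ↑z ∈ Rhat R ↔ y ∈ Rhat R := by
  unfold Normalizes at hz
  rw [← SetLike.mem_coe, ← hz]
  refine ⟨fun ⟨r, hr, hry⟩ => ?_, fun h => ⟨y, h, rfl⟩⟩
  obtain rfl : r = y := by simpa using hry
  exact hr

theorem mul_mul_inv_mem_iff (hz : Normalizes R z) (y : Bhat F a b) :
    ↑z * y * ↑z⁻¹ ∈ Rhat R ↔ y ∈ Rhat R := by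
  rw [← hz.inv_mul_mul_mem_iff]
  simp [mul_assoc]

theorem mem_normalizer (hz : Normalizes R z) :
    z ∈ Subgroup.normalizer (Uhat R : Set (Bhat F a b)ˣ) := by
  refine Subgroup.mem_normalizer_iff.2 fun u => ?_
  have hinv : (z * u * z⁻¹)⁻¹ = z * u⁻¹ * z⁻¹ := by group
  simp only [Uhat_eq_units, Submonoid.mem_units_iff, hinv, Units.val_mul]
  exact (and_congr (hz.mul_mul_inv_mem_iff _) (hz.mul_mul_inv_mem_iff _)).symm

theorem Rx_mul (hz : Normalizes R z) (x : (Bhat F a b)ˣ) : Rx R (z * x) = Rx R x := by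
  ext w
  have hconj : ((z * x : (Bhat F a b)ˣ) : Bhat F a b) * iotaB F a b w * ↑(z * x)⁻¹ =
      ↑z * (↑x * iotaB F a b w * ↑x⁻¹) * ↑z⁻¹ := by
    simp [mul_assoc]
  rw [mem_Rx_iff, mem_Rx_iff, hconj, hz.mul_mul_inv_mem_iff]

theorem RxUnits_mul (hz : Normalizes R z) (x : (Bhat F a b)ˣ) :
    RxUnits R (z * x) = RxUnits R x := by
  simp only [RxUnits, hz.Rx_mul]

end Normalizes

theorem IsStabReps.card_eq_of_mul_eq {x x' z u : (Bhat F a b)ˣ} {γ : ℍ[F, a, b]ˣ}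
    {T T' : Finset ℍ[F, a, b]ˣ} (hz : Normalizes R z) (hu : u ∈ Uhat R)
    (h : z * x = u * x' * gmap F a b γ) (hT : IsStabReps R x T) (hT' : IsStabReps R x' T') :
    T.card = T'.card := by
  have hS : RxUnits R x = MulAut.conj γ ⁻¹' RxUnits R x' := by
    rw [← hz.RxUnits_mul, h, RxUnits_mul_mul_gmap hu]
  have hT₀ : IsLeftCosetReps (OunitsB F a b) (MulAut.conj γ ⁻¹' RxUnits R x') T := hS ▸ hT
  rw [← Finset.card_map (MulAut.conj γ).toEquiv.toEmbedding]
  exact (hT₀.map _ fun ε => conj_eq_of_mem_OunitsB γ).card_eq hT'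

namespace IsClassReps

variable {xs : Finset (Bhat F a b)ˣ} (hcl : IsClassReps R xs)

noncomputable def rep (y : (Bhat F a b)ˣ) : (Bhat F a b)ˣ := (hcl y).choose

theorem rep_mem (y : (Bhat F a b)ˣ) : hcl.rep y ∈ xs := (hcl y).choose_spec.1.1

theorem exists_eq_mul_rep_mul (y : (Bhat F a b)ˣ) :
    ∃ u ∈ Uhat R, ∃ γ : ℍ[F, a, b]ˣ, y = u * hcl.rep y * gmap F a b γ :=
  (hcl y).choose_spec.1.2

theorem rep_eq {x y u : (Bhat F a b)ˣ} {γ : ℍ[F, a, b]ˣ} (hx : x ∈ xs) (hu : u ∈ Uhat R)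
    (h : y = u * x * gmap F a b γ) : hcl.rep y = x :=
  ((hcl y).choose_spec.2 x ⟨hx, u, hu, γ, h⟩).symm

theorem rep_mul_rep_inv_mul {x z : (Bhat F a b)ˣ}
    (hz : z ∈ Subgroup.normalizer (Uhat R : Set (Bhat F a b)ˣ)) (hx : x ∈ xs) :
    hcl.rep (z * hcl.rep (z⁻¹ * x)) = x := by
  obtain ⟨u, hu, γ, h⟩ := hcl.exists_eq_mul_rep_mul (z⁻¹ * x)
  generalize hcl.rep (z⁻¹ * x) = x' at h ⊢
  refine hcl.rep_eq hx ((Subgroup.mem_normalizer_iff.1 hz _).1 (inv_mem hu)) (γ := γ⁻¹) ?_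
  have hx' : x = z * (u * x' * gmap F a b γ) := by
    rw [← h]
    group
  rw [hx', map_inv]
  group

theorem sum_rep_mul {M : Type*} [AddCommMonoid M] {z : (Bhat F a b)ˣ}
    (hz : z ∈ Subgroup.normalizer (Uhat R : Set (Bhat F a b)ˣ)) (f : (Bhat F a b)ˣ → M) :
    ∑ x ∈ xs, f (hcl.rep (z * x)) = ∑ x ∈ xs, f x :=
  Finset.sum_nbij' (fun x => hcl.rep (z * x)) (fun x => hcl.rep (z⁻¹ * x))
    (fun _ _ => hcl.rep_mem _) (fun _ _ => hcl.rep_mem _)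
    (fun x hx => by simpa using hcl.rep_mul_rep_inv_mul (inv_mem hz) hx)
    (fun x hx => hcl.rep_mul_rep_inv_mul hz hx) (fun _ _ => rfl)

end IsClassReps

end Quaternionic

theorem statement_12_general
    {F : Type*} [Field F] [NumberField F]
    {a b : F}
    (R : Subring ℍ[F, a, b])
    {V : Type*} [AddCommGroup V] [Module ℂ V]
    (act : V → ℍ[F, a, b]ˣ → V)
    (herm : V → V → ℂ)
    (herm_unitary : ∀ (v w : V) (γ : ℍ[F, a, b]ˣ), herm (act v γ) (act w γ) = herm v w)
    (z : (Bhat F a b)ˣ) (hz : Normalizes R z)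
    (φ ψ : (Bhat F a b)ˣ → V) (hφ : IsQMF R act φ) (hψ : IsQMF R act ψ)
    (xs : Finset (Bhat F a b)ˣ) (hcl : IsClassReps R xs)
    (Tx : (Bhat F a b)ˣ → Finset ℍ[F, a, b]ˣ)
    (hTx : ∀ x ∈ xs, IsStabReps R x (Tx x)) :
    ∑ x ∈ xs, ((Tx x).card : ℂ)⁻¹ * herm (φ (z * x)) (ψ (z * x))
      = ∑ x ∈ xs, ((Tx x).card : ℂ)⁻¹ * herm (φ x) (ψ x) := by
  calc ∑ x ∈ xs, ((Tx x).card : ℂ)⁻¹ * herm (φ (z * x)) (ψ (z * x))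
      = ∑ x ∈ xs, ((Tx (hcl.rep (z * x))).card : ℂ)⁻¹ *
          herm (φ (hcl.rep (z * x))) (ψ (hcl.rep (z * x))) := by
        refine Finset.sum_congr rfl fun x hx => ?_
        obtain ⟨u, hu, γ, hzx⟩ := hcl.exists_eq_mul_rep_mul (z * x)
        have hx' := hcl.rep_mem (z * x)
        generalize hcl.rep (z * x) = x' at hzx hx' ⊢
        rw [IsStabReps.card_eq_of_mul_eq hz hu hzx (hTx x hx) (hTx x' hx'), hzx, hφ u hu γ,
          hψ u hu γ, herm_unitary]
    _ = _ := hcl.sum_rep_mul hz.mem_normalizer fun x => ((Tx x).card : ℂ)⁻¹ * herm (φ x) (ψ x)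

/-- the height pairing is invariant under the action of the normalizer:
`⟨⟨φ·z, ψ·z⟩⟩ = ⟨⟨φ, ψ⟩⟩`. -/
theorem statement_12
    {F : Type*} [Field F] [NumberField F]
    (htr : ∀ φ : F →+* ℂ, ∀ x : F, (φ x).im = 0)
    {a b : F} (ha0 : a ≠ 0) (hb0 : b ≠ 0)
    (ha : ∀ τ : F →+* ℝ, τ a < 0) (hb : ∀ τ : F →+* ℝ, τ b < 0)
    (R : Subring ℍ[F, a, b])
    (hRO : ∀ c : NumberField.RingOfIntegers F,
      algebraMap F ℍ[F, a, b] (algebraMap (NumberField.RingOfIntegers F) F c) ∈ R)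
    (hRfg : (Submodule.span (NumberField.RingOfIntegers F) (R : Set ℍ[F, a, b])).FG)
    (hRspan : Submodule.span F (R : Set ℍ[F, a, b]) = ⊤)
    {V : Type*} [AddCommGroup V] [Module ℂ V]
    (act : V → ℍ[F, a, b]ˣ → V) (hact : IsWeightRep F a b act)

    (herm : V → V → ℂ)
    (herm_add : ∀ v₁ v₂ w : V, herm (v₁ + v₂) w = herm v₁ w + herm v₂ w)
    (herm_smul : ∀ (c : ℂ) (v w : V), herm (c • v) w = c * herm v w)
    (herm_conj : ∀ v w : V, herm w v = starRingEnd ℂ (herm v w))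
    (herm_pos : ∀ v : V, v ≠ 0 → 0 < (herm v v).re)
    (herm_unitary : ∀ (v w : V) (γ : ℍ[F, a, b]ˣ), herm (act v γ) (act w γ) = herm v w)
    (z : (Bhat F a b)ˣ) (hz : Normalizes R z)
    (φ ψ : (Bhat F a b)ˣ → V) (hφ : IsQMF R act φ) (hψ : IsQMF R act ψ)
    (xs : Finset (Bhat F a b)ˣ) (hcl : IsClassReps R xs)
    (Tx : (Bhat F a b)ˣ → Finset ℍ[F, a, b]ˣ)
    (hTx : ∀ x ∈ xs, IsStabReps R x (Tx x))
    (hstab : ∀ x : (Bhat F a b)ˣ, ∃ T : Finset ℍ[F, a, b]ˣ, IsStabReps R x T) :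
    ∑ x ∈ xs, ((Tx x).card : ℂ)⁻¹ * herm (φ (z * x)) (ψ (z * x))
      = ∑ x ∈ xs, ((Tx x).card : ℂ)⁻¹ * herm (φ x) (ψ x) :=
  statement_12_general R act herm herm_unitary z hz φ ψ hφ hψ xs hcl Tx hTx
end
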